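/- arXiv:2506.16229 — 11 statements merged into one kernel-verified Lean document; each statement's English description precedes it below -/
import Mathlib

section
/- Fix α ∈ (0,1). The random time τ_BH := max{ t ∈ {1, …, n+m} : (m/(n+1)) · (1 + Σ_{s=1}^t B_s) / max(1, Σ_{s=1}^t (1 − B_s)) ≤ α } (with τ_BH := 0 if this set is empty) satisfies {τ_BH ≥ t} ∈ F_t for every t, i.e., τ_BH is a stopping time with respect to the reverse filtration (F_t)_{t=0}^{n+m}; consequently the variables e_1^{(τ_BH)}, …, e_m^{(τ_BH)} are e-values: E[e_i^{(τ_BH)} · 1{Y_{n+i} ≤ 0}] ≤ 1 for every i = 1, …, m. -/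
/-!
The event `τ_BH ≥ t` only depends on the numbers `N_{t'}` of calibration scores above the first
`t'` sorted places for `t' ≥ t`, and these are read off from `B_{t+1}, …, B_{n+m}`.

For the e-value bound, exchange the test point `p` with each candidate `j` (a calibration point,
or `p` itself). The data are i.i.d., so all `n + 1` exchanged configurations have the same mean
e-value, and it suffices to bound the sum of their e-values by `n + 1` pointwise. When `Y_j ≤ 0`,
the scores of configuration `j` are the oracle scores, clipped on all candidates, permuted by the
exchange. Hence, if `r_j` is the rank of `j` among the oracle scores and `K t` counts the
candidates among the `t` smallest oracle scores, configuration `j` has `K t - 1{r_j < t}`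
calibration scores among its `t` smallest. It follows that all `j` with a nonzero e-value
(`r_j < τ_j`) share the same BH time `τ`, that there are at most `K τ` of them, and that each
e-value equals `(n + 1) / K τ`.
-/

open MeasureTheory ProbabilityTheory Finset
open scoped ENNReal

namespace ConformalBH

section Ranks

variable {ι α : Type*} [LinearOrder α] {N : ℕ}

theorem card_filter_comp_perm [Fintype ι] (σ : Equiv.Perm ι) (P : ι → Prop) [DecidablePred P] :
    #{s | P (σ s)} = #{k | P k} :=
  card_equiv σ (by simp)

theorem card_filter_erase_add_ite [DecidableEq ι] {s : Finset ι} {a : ι} (ha : a ∈ s)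
    (P : ι → Prop) [DecidablePred P] :
    #{k ∈ s.erase a | P k} + (if P a then 1 else 0) = #{k ∈ s | P k} := by
  rw [filter_erase]
  split_ifs with h
  · exact card_erase_add_one (mem_filter.2 ⟨ha, h⟩)
  · rw [erase_eq_of_notMem (fun h' => h (mem_filter.1 h').2), add_zero]

theorem eq_sort_of_lt_or_eq_and_lt {w : Fin N → α} {σ : Equiv.Perm (Fin N)}
    (h : ∀ s s', s < s' → w (σ s) < w (σ s') ∨ (w (σ s) = w (σ s') ∧ σ s < σ s')) :
    σ = Tuple.sort w := by
  refine Tuple.eq_sort_iff.2 ⟨fun s s' hle => ?_, fun s s' hlt heq =>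
    ((h s s' hlt).resolve_left heq.not_lt).2⟩
  rcases hle.eq_or_lt with rfl | hlt
  · exact le_rfl
  · exact (h s s' hlt).elim le_of_lt fun h' => h'.1.le

theorem rank_eq_card_lt {w : Fin N → α} {σ : Equiv.Perm (Fin N)} (hσ : Monotone (w ∘ σ))
    {k : Fin N} (hk : ∀ k', w k' = w k → k' = k) :
    ((σ⁻¹ k : Fin N) : ℕ) = #{k' | w k' < w k} := by
  have hmono : ∀ {a b}, a ≤ b → w (σ a) ≤ w (σ b) := fun h => hσ h
  have hσk : w (σ (σ⁻¹ k)) = w k := by simp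
  have key : ∀ s, s < σ⁻¹ k ↔ w (σ s) < w k := by
    intro s
    constructor
    · intro h
      refine lt_of_le_of_ne (hσk ▸ hmono h.le) fun heq => h.ne ?_
      rw [← hk _ heq]
      simp
    · intro h
      by_contra hc
      exact (hσk ▸ hmono (not_lt.1 hc)).not_gt h
  rw [← Fin.card_Iio, ← card_filter_comp_perm σ fun k' => w k' < w k]
  congr 1
  ext s
  simp only [mem_Iio, mem_filter, mem_univ, true_and, key]

theorem card_filter_rank_lt_eq {w : Fin N → α} {σ σ' : Equiv.Perm (Fin N)}
    (hσ : Monotone (w ∘ σ)) (hσ' : Monotone (w ∘ σ')) (C : Finset (Fin N))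
    (hC : ∀ k ∉ C, ∀ k', w k' = w k → k' = k) (t : ℕ) :
    #{k ∈ C | ((σ⁻¹ k : Fin N) : ℕ) < t} = #{k ∈ C | ((σ'⁻¹ k : Fin N) : ℕ) < t} := by
  have split : ∀ τ : Equiv.Perm (Fin N), #{k ∈ C | ((τ⁻¹ k : Fin N) : ℕ) < t} +
      #{k ∈ Cᶜ | ((τ⁻¹ k : Fin N) : ℕ) < t} = min N t := by
    intro τ
    rw [← Fin.card_filter_val_lt, ← card_filter_comp_perm τ⁻¹, ← card_union_of_disjoint
      (disjoint_filter_filter disjoint_compl_right), ← filter_union, union_compl]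
  have outside : #{k ∈ Cᶜ | ((σ⁻¹ k : Fin N) : ℕ) < t} =
      #{k ∈ Cᶜ | ((σ'⁻¹ k : Fin N) : ℕ) < t} := by
    congr 1
    refine filter_congr fun k hk => ?_
    have hk' := hC k (mem_compl.1 hk)
    rw [rank_eq_card_lt hσ hk', rank_eq_card_lt hσ' hk']
  have h := split σ
  have h' := split σ'
  omega

end Ranks

section SortedScore

variable {α : Type*} [LinearOrder α] [OrderBot α] {N : ℕ}

/-- `sortedScore w σ t` is the `t`-th score in the order `σ`, counting from `1`; the `0`-th is `⊥`. -/
def sortedScore (w : Fin N → α) (σ : Equiv.Perm (Fin N)) : ℕ → α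
  | 0 => ⊥
  | t + 1 => if h : t < N then w (σ ⟨t, h⟩) else ⊥

theorem le_sortedScore_iff {w : Fin N → α} {σ : Equiv.Perm (Fin N)} (hσ : Monotone (w ∘ σ))
    {k : Fin N} (hk : ∀ k', w k' = w k → k' = k) (hbot : w k ≠ ⊥) {t : ℕ} (ht : t ≤ N) :
    w k ≤ sortedScore w σ t ↔ ((σ⁻¹ k : Fin N) : ℕ) < t := by
  have hmono : ∀ {a b}, a ≤ b → w (σ a) ≤ w (σ b) := fun h => hσ h
  have hσk : w (σ (σ⁻¹ k)) = w k := by simp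
  cases t with
  | zero => simpa [sortedScore] using hbot
  | succ t =>
    have htN : t < N := ht
    rw [sortedScore, dif_pos htN, Nat.lt_succ_iff]
    constructor
    · intro h
      by_contra hc
      have hlt : (⟨t, htN⟩ : Fin N) < σ⁻¹ k := not_le.1 hc
      have heq : w (σ ⟨t, htN⟩) = w k := le_antisymm (hσk ▸ hmono hlt.le) h
      exact hlt.ne (by rw [← hk _ heq]; simp)
    · intro h
      exact hσk ▸ hmono (show σ⁻¹ k ≤ ⟨t, htN⟩ from h)

theorem sortedScore_comp_perm (w : Fin N → α) (e σ : Equiv.Perm (Fin N)) (t : ℕ) :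
    sortedScore (w ∘ e) σ t = sortedScore w (e * σ) t := by
  cases t <;> rfl

theorem eq_sortedScore {Ws : ℕ → α} {w : Fin N → α} {σ : Equiv.Perm (Fin N)} (h0 : Ws 0 = ⊥)
    (hs : ∀ t (h : t < N), Ws (t + 1) = w (σ ⟨t, h⟩)) {t : ℕ} (ht : t ≤ N) :
    Ws t = sortedScore w σ t := by
  cases t with
  | zero => exact h0
  | succ t => rw [sortedScore, dif_pos (Nat.lt_of_succ_le ht), hs t]

theorem measurable_sortedScore [MeasurableSpace α] {β : Type*} [MeasurableSpace β]
    {w : β → Fin N → α} (hw : ∀ k, Measurable fun b => w b k) (π : Equiv.Perm (Fin N)) (t : ℕ) :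
    Measurable fun b => sortedScore (w b) π t := by
  cases t with
  | zero => exact measurable_const
  | succ t =>
    by_cases ht : t < N
    · simpa only [sortedScore, dif_pos ht] using hw _
    · simpa only [sortedScore, dif_neg ht] using measurable_const

end SortedScore

section LastTime

variable {N : ℕ}

/-- The largest `t ∈ [1, N]` with `P t`, and `0` if there is none (`sSup ∅ = 0` in `ℕ`). -/
noncomputable def lastTime (N : ℕ) (P : ℕ → Prop) : ℕ :=
  sSup {t | 1 ≤ t ∧ t ≤ N ∧ P t}

theorem bddAbove_lastTime_set (P : ℕ → Prop) : BddAbove {t | 1 ≤ t ∧ t ≤ N ∧ P t} :=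
  ⟨N, fun _ ht => ht.2.1⟩

theorem le_lastTime {P : ℕ → Prop} {t : ℕ} (h1 : 1 ≤ t) (hN : t ≤ N) (hP : P t) :
    t ≤ lastTime N P :=
  le_csSup (bddAbove_lastTime_set P) ⟨h1, hN, hP⟩

theorem lastTime_spec {P : ℕ → Prop} (h : lastTime N P ≠ 0) :
    1 ≤ lastTime N P ∧ lastTime N P ≤ N ∧ P (lastTime N P) := by
  refine Nat.sSup_mem ?_ (bddAbove_lastTime_set P)
  by_contra hne
  exact h (by rw [lastTime, Set.not_nonempty_iff_eq_empty.1 hne]; simp)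

theorem lastTime_le (P : ℕ → Prop) : lastTime N P ≤ N := by
  by_cases h : lastTime N P = 0
  · omega
  · exact (lastTime_spec h).2.1

theorem le_lastTime_iff {P : ℕ → Prop} {t : ℕ} (ht : 1 ≤ t) :
    t ≤ lastTime N P ↔ ∃ t' ∈ Icc t N, P t' := by
  constructor
  · intro h
    obtain ⟨-, hN, hP⟩ := lastTime_spec (N := N) (P := P) (by omega)
    exact ⟨_, mem_Icc.2 ⟨h, hN⟩, hP⟩
  · rintro ⟨t', ht', hP⟩
    rw [mem_Icc] at ht'
    exact ht'.1.trans (le_lastTime (by omega) ht'.2 hP)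

theorem lastTime_le_of_leave_one_out {P : ℕ → ℕ → Prop} {K c c' : ℕ → ℕ} {r r' : ℕ}
    (hc : ∀ t, c t + (if r < t then 1 else 0) = K t)
    (hc' : ∀ t, c' t + (if r' < t then 1 else 0) = K t)
    (hr : r < lastTime N fun t => P t (c t)) (hr' : r' < lastTime N fun t => P t (c' t)) :
    (lastTime N fun t => P t (c t)) ≤ lastTime N fun t => P t (c' t) := by
  have hsame : ∀ t, r < t → r' < t → c' t = c t := fun t h h' => by
    have e := hc t
    have e' := hc' t
    rw [if_pos h] at e
    rw [if_pos h'] at e'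
    omega
  by_contra hlt
  obtain ⟨h1, hN, hP⟩ := lastTime_spec (N := N) (P := fun t => P t (c t)) (by omega)
  refine hlt (le_lastTime (P := fun t => P t (c' t)) h1 hN ?_)
  rwa [hsame _ hr (hr'.trans (not_le.1 hlt))]

theorem sum_div_le_of_leave_one_out {ι : Type*} (A : Finset ι) {P : ℕ → ℕ → Prop}
    {K : ℕ → ℕ} {c : ι → ℕ → ℕ} {r : ι → ℕ} {x : ℝ} (hx : 0 ≤ x)
    (hc : ∀ j ∈ A, ∀ t, c j t + (if r j < t then 1 else 0) = K t)
    (hr : ∀ j ∈ A, r j < lastTime N fun t => P t (c j t))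
    (hK : ∀ t, #{j ∈ A | r j < t} ≤ K t) :
    ∑ j ∈ A, x / (1 + c j (lastTime N fun t => P t (c j t))) ≤ x := by
  rcases A.eq_empty_or_nonempty with rfl | ⟨j₀, hj₀⟩
  · simpa using hx
  set τ := lastTime N fun t => P t (c j₀ t)
  have hτ : ∀ j ∈ A, (lastTime N fun t => P t (c j t)) = τ := fun j hj =>
    le_antisymm (lastTime_le_of_leave_one_out (hc j hj) (hc j₀ hj₀) (hr j hj) (hr j₀ hj₀))
      (lastTime_le_of_leave_one_out (hc j₀ hj₀) (hc j hj) (hr j₀ hj₀) (hr j hj))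
  have hcK : ∀ j ∈ A, (1 + c j τ : ℝ) = K τ := by
    intro j hj
    have := hc j hj τ
    rw [if_pos (hτ j hj ▸ hr j hj)] at this
    exact_mod_cast (by omega : 1 + c j τ = K τ)
  have hA : #A ≤ K τ := by
    simpa [filter_true_of_mem fun j hj => hτ j hj ▸ hr j hj] using hK τ
  have hKpos : (0 : ℝ) < K τ := by rw [← hcK j₀ hj₀]; positivity
  calc ∑ j ∈ A, x / (1 + c j (lastTime N fun t => P t (c j t)))
      = ∑ _j ∈ A, x / K τ := sum_congr rfl fun j hj => by rw [hτ j hj, hcK j hj]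
    _ = #A * (x / K τ) := by rw [sum_const, nsmul_eq_mul]
    _ ≤ K τ * (x / K τ) := by gcongr
    _ = x := by field_simp

end LastTime

section ClippedScore

variable {ι 𝓧 : Type*} [DecidableEq ι]

/-- The clipped score `V^clip` at the positions in `S`, the imputed score `-μhat x` elsewhere. -/
noncomputable def clippedScore (S : Finset ι) (μhat : 𝓧 → ℝ) (v : ι → 𝓧 × ℝ) (k : ι) : EReal :=
  if k ∈ S ∧ 0 < (v k).2 then ⊤ else ((-μhat (v k).1 : ℝ) : EReal)

variable {S : Finset ι} {μhat : 𝓧 → ℝ} {v : ι → 𝓧 × ℝ} {k : ι}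

theorem clippedScore_of_unclipped (hk : k ∉ S ∨ (v k).2 ≤ 0) :
    clippedScore S μhat v k = ((-μhat (v k).1 : ℝ) : EReal) :=
  if_neg fun h => hk.elim (· h.1) fun hy => hy.not_gt h.2

theorem clippedScore_eq_imp_eq (hv : ∀ k k', k ≠ k' → μhat (v k).1 ≠ μhat (v k').1)
    (hk : k ∉ S ∨ (v k).2 ≤ 0) (k' : ι) :
    clippedScore S μhat v k' = clippedScore S μhat v k → k' = k := by
  rw [clippedScore_of_unclipped hk]
  unfold clippedScore
  split_ifs
  · exact fun h => absurd h.symm (EReal.coe_ne_top _)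
  · intro h
    by_contra hne
    exact hv k' k hne (neg_injective (EReal.coe_injective h))

theorem mem_iff_swap_mem_erase_insert {j p : ι} (hj : j ∈ insert p S) (hp : p ∉ S) :
    k ∈ S ↔ Equiv.swap j p k ∈ (insert p S).erase j := by
  rcases eq_or_ne j p with rfl | hjp
  · simp only [Equiv.swap_self, Equiv.refl_apply, erase_insert hp]
  have hjS : j ∈ S := (mem_insert.1 hj).resolve_left hjp
  rcases eq_or_ne k j with rfl | hkj
  · simp [hjS, hjp.symm]
  rcases eq_or_ne k p with rfl | hkp
  · simp [hp]
  · simp [Equiv.swap_apply_of_ne_of_ne hkj hkp, hkj, hkp]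

/-- Exchanging a point `j` of `insert p S` with `p` moves the clipped positions from `S` to
`(insert p S).erase j`; clipping at `j` is irrelevant when its response is nonpositive. -/
theorem clippedScore_comp_swap {j p : ι} (hj : j ∈ insert p S) (hp : p ∉ S) (hy : (v j).2 ≤ 0) :
    clippedScore S μhat (v ∘ Equiv.swap j p) =
      clippedScore (insert p S) μhat v ∘ Equiv.swap j p := by
  funext k
  simp only [clippedScore, Function.comp_apply]
  refine if_congr ?_ rfl rfl
  rw [mem_iff_swap_mem_erase_insert hj hp, mem_erase]
  by_cases hkj : Equiv.swap j p k = j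
  · simp only [hkj, hy.not_gt, and_false]
  · simp only [hkj, ne_eq, not_false_eq_true, true_and]

end ClippedScore

section BH

variable {𝓧 : Type*} (n m : ℕ) (α : ℝ) (μhat : 𝓧 → ℝ)

def calib : Finset (Fin (n + m)) := {k | (k : ℕ) < n}

def calCountBelow (π : Equiv.Perm (Fin (n + m))) (t : ℕ) : ℕ :=
  (univ.filter fun s : Fin (n + m) => (s : ℕ) < t ∧ (π s : ℕ) < n).card

def calCountAbove (π : Equiv.Perm (Fin (n + m))) (t : ℕ) : ℕ :=
  (univ.filter fun s : Fin (n + m) => t ≤ (s : ℕ) ∧ (π s : ℕ) < n).card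

def bhCriterion (t c : ℕ) : Prop :=
  (m : ℝ) / ((n : ℝ) + 1) * (1 + (c : ℝ)) / max 1 ((t : ℝ) - (c : ℝ)) ≤ α

noncomputable def bhTime (π : Equiv.Perm (Fin (n + m))) : ℕ :=
  lastTime (n + m) fun t => bhCriterion n m α t (calCountBelow n m π t)

/-- The e-value of test slot `p` stopped at `bhTime`, times the null indicator `1{y_p ≤ 0}`,
when the scores are sorted by `π`. -/
noncomputable def eValueAt (p : Fin (n + m)) (π : Equiv.Perm (Fin (n + m)))
    (v : Fin (n + m) → 𝓧 × ℝ) : ℝ :=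
  ((n : ℝ) + 1) *
      (if clippedScore (calib n m) μhat v p ≤
          sortedScore (clippedScore (calib n m) μhat v) π (bhTime n m α π) then 1 else 0) /
      (1 + (n : ℝ) - (calCountAbove n m π (bhTime n m α π) : ℝ)) *
    (if (v p).2 ≤ 0 then 1 else 0)

noncomputable def nullEValue (p : Fin (n + m)) (v : Fin (n + m) → 𝓧 × ℝ) : ℝ≥0∞ :=
  ENNReal.ofReal (eValueAt n m α μhat p (Tuple.sort (clippedScore (calib n m) μhat v)) v)

variable {n m α μhat}

theorem bhTime_le (π : Equiv.Perm (Fin (n + m))) : bhTime n m α π ≤ n + m :=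
  lastTime_le _

theorem calCountBelow_eq_card (π : Equiv.Perm (Fin (n + m))) (t : ℕ) :
    calCountBelow n m π t = #{k ∈ calib n m | ((π⁻¹ k : Fin (n + m)) : ℕ) < t} := by
  refine card_equiv π fun s => ?_
  simp [calib, and_comm]

theorem calCountBelow_add_calCountAbove (π : Equiv.Perm (Fin (n + m))) (t : ℕ) :
    calCountBelow n m π t + calCountAbove n m π t = n := by
  rw [calCountBelow, calCountAbove, ← card_union_of_disjoint, ← filter_or]
  · rw [card_equiv π (t := univ.filter fun k : Fin (n + m) => (k : ℕ) < n) fun s => by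
      simp only [mem_filter, mem_univ, true_and]; omega, Fin.card_filter_val_lt]
    omega
  · exact disjoint_filter.2 fun s _ h1 h2 => by omega

theorem calCountBelow_eq_sub (π : Equiv.Perm (Fin (n + m))) (t : ℕ) :
    calCountBelow n m π t = n - calCountAbove n m π t := by
  have := calCountBelow_add_calCountAbove π t
  omega

theorem clippedScore_calib_eq {x : ℕ → 𝓧} {y : ℕ → ℝ} {W : ℕ → EReal}
    (hcal : ∀ i < n, W i = if 0 < y i then ⊤ else ((-μhat (x i) : ℝ) : EReal))
    (htest : ∀ i < m, W (n + i) = ((-μhat (x (n + i)) : ℝ) : EReal)) :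
    clippedScore (calib n m) μhat (fun k => (x k, y k)) = fun k : Fin (n + m) => W k := by
  funext k
  by_cases hk : (k : ℕ) < n
  · simp [clippedScore, calib, hk, hcal k hk]
  · have h := htest (k - n) (by omega)
    rw [Nat.add_sub_cancel' (not_lt.1 hk)] at h
    simp [clippedScore, calib, hk, h]

/-- Seen from the permutation `Equiv.swap j p * σ`, which sorts the unswapped scores, the
calibration positions are the candidates `insert p (calib n m)` other than `j`. -/
theorem calCountBelow_add_ite {p j : Fin (n + m)} (hp : n ≤ (p : ℕ))
    (hj : j ∈ insert p (calib n m)) (σ : Equiv.Perm (Fin (n + m))) (t : ℕ) :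
    calCountBelow n m σ t +
        (if (((Equiv.swap j p * σ)⁻¹ j : Fin (n + m)) : ℕ) < t then 1 else 0) =
      #{k ∈ insert p (calib n m) | (((Equiv.swap j p * σ)⁻¹ k : Fin (n + m)) : ℕ) < t} := by
  have hpS : p ∉ calib n m := by simp [calib, hp]
  rw [← card_filter_erase_add_ite hj, calCountBelow_eq_card]
  congr 1
  refine card_equiv (Equiv.swap j p) fun k => ?_
  simp [← mem_iff_swap_mem_erase_insert hj hpS, mul_inv_rev]

theorem eValueAt_eq (p : Fin (n + m)) (π : Equiv.Perm (Fin (n + m))) (v : Fin (n + m) → 𝓧 × ℝ) :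
    eValueAt n m α μhat p π v =
      if clippedScore (calib n m) μhat v p ≤
          sortedScore (clippedScore (calib n m) μhat v) π (bhTime n m α π) ∧ (v p).2 ≤ 0
        then ((n : ℝ) + 1) / (1 + (calCountBelow n m π (bhTime n m α π) : ℝ)) else 0 := by
  have hden : 1 + (n : ℝ) - calCountAbove n m π (bhTime n m α π) =
      1 + calCountBelow n m π (bhTime n m α π) := by
    have h : (calCountBelow n m π (bhTime n m α π) : ℝ) + calCountAbove n m π (bhTime n m α π) =
        n := by exact_mod_cast calCountBelow_add_calCountAbove π _
    linarith
  rw [eValueAt, hden]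
  split_ifs <;> simp_all

theorem eValueAt_comp_swap {v : Fin (n + m) → 𝓧 × ℝ}
    (hv : ∀ k k', k ≠ k' → μhat (v k).1 ≠ μhat (v k').1) {p j : Fin (n + m)} (hp : n ≤ (p : ℕ))
    (hj : j ∈ insert p (calib n m)) :
    let u := clippedScore (insert p (calib n m)) μhat v
    let σ := Tuple.sort (u ∘ Equiv.swap j p)
    eValueAt n m α μhat p (Tuple.sort (clippedScore (calib n m) μhat (v ∘ Equiv.swap j p)))
        (v ∘ Equiv.swap j p) =
      if (v j).2 ≤ 0 ∧ #{k | u k < u j} < bhTime n m α σ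
        then ((n : ℝ) + 1) / (1 + (calCountBelow n m σ (bhTime n m α σ) : ℝ)) else 0 := by
  have hpS : p ∉ calib n m := by simp [calib, hp]
  dsimp only
  rw [eValueAt_eq]
  by_cases hy : (v j).2 ≤ 0
  · rw [clippedScore_comp_swap hj hpS hy, sortedScore_comp_perm]
    set u := clippedScore (insert p (calib n m)) μhat v
    set σ := Tuple.sort (u ∘ Equiv.swap j p)
    have huniq := clippedScore_eq_imp_eq (S := insert p (calib n m)) hv (Or.inr hy)
    have hbot : clippedScore (insert p (calib n m)) μhat v j ≠ ⊥ := by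
      rw [clippedScore_of_unclipped (Or.inr hy)]
      exact EReal.coe_ne_bot _
    have hmono : Monotone (u ∘ (Equiv.swap j p * σ)) := Tuple.monotone_sort (u ∘ Equiv.swap j p)
    simp only [Function.comp_apply, Equiv.swap_apply_right, hy, and_true, true_and]
    simp only [le_sortedScore_iff hmono huniq hbot (bhTime_le σ), rank_eq_card_lt hmono huniq]
  · simp [hy]

theorem sum_nullEValue_comp_swap_le {v : Fin (n + m) → 𝓧 × ℝ}
    (hv : ∀ k k', k ≠ k' → μhat (v k).1 ≠ μhat (v k').1) {p : Fin (n + m)} (hp : n ≤ (p : ℕ)) :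
    ∑ j ∈ insert p (calib n m), nullEValue n m α μhat p (v ∘ Equiv.swap j p) ≤ n + 1 := by
  set C := insert p (calib n m)
  set u := clippedScore C μhat v
  set σ : Fin (n + m) → Equiv.Perm (Fin (n + m)) := fun j => Tuple.sort (u ∘ Equiv.swap j p)
  set r : Fin (n + m) → ℕ := fun j => #{k | u k < u j}
  set A := C.filter fun j => (v j).2 ≤ 0 ∧ r j < bhTime n m α (σ j)
  have huniq : ∀ k, k ∉ C ∨ (v k).2 ≤ 0 → ∀ k', u k' = u k → k' = k :=
    fun k hk => clippedScore_eq_imp_eq hv hk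
  have hmono : ∀ j, Monotone (u ∘ (Equiv.swap j p * σ j)) :=
    fun j => Tuple.monotone_sort (u ∘ Equiv.swap j p)
  have hrank : ∀ j ∈ A, r j = (((Equiv.swap j p * σ j)⁻¹ j : Fin (n + m)) : ℕ) := fun j hj =>
    (rank_eq_card_lt (hmono j) (huniq j (Or.inr (mem_filter.1 hj).2.1))).symm
  have hsortRank : ∀ j ∈ A, r j = (((Tuple.sort u)⁻¹ j : Fin (n + m)) : ℕ) := fun j hj =>
    (rank_eq_card_lt (Tuple.monotone_sort u) (huniq j (Or.inr (mem_filter.1 hj).2.1))).symm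
  have hcount : ∀ j ∈ A, ∀ t, calCountBelow n m (σ j) t + (if r j < t then 1 else 0) =
      #{k ∈ C | (((Tuple.sort u)⁻¹ k : Fin (n + m)) : ℕ) < t} := fun j hj t => by
    rw [hrank j hj, calCountBelow_add_ite hp (mem_filter.1 hj).1]
    exact card_filter_rank_lt_eq (hmono j) (Tuple.monotone_sort u) C
      (fun k hk => huniq k (Or.inl hk)) t
  have hK : ∀ t, #{j ∈ A | r j < t} ≤ #{k ∈ C | (((Tuple.sort u)⁻¹ k : Fin (n + m)) : ℕ) < t} :=
    fun t => card_le_card fun j hj => by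
      obtain ⟨hjA, hjt⟩ := mem_filter.1 hj
      exact mem_filter.2 ⟨(mem_filter.1 hjA).1, hsortRank j hjA ▸ hjt⟩
  calc ∑ j ∈ C, nullEValue n m α μhat p (v ∘ Equiv.swap j p)
      = ENNReal.ofReal (∑ j ∈ A,
          ((n : ℝ) + 1) / (1 + (calCountBelow n m (σ j) (bhTime n m α (σ j)) : ℝ))) := by
        rw [ENNReal.ofReal_sum_of_nonneg fun _ _ => by positivity, sum_filter]
        refine sum_congr rfl fun j hj => ?_
        rw [nullEValue, eValueAt_comp_swap hv hp hj, apply_ite ENNReal.ofReal, ENNReal.ofReal_zero]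
    _ ≤ ENNReal.ofReal ((n : ℝ) + 1) :=
        ENNReal.ofReal_le_ofReal (sum_div_le_of_leave_one_out A (P := bhCriterion n m α)
          (by positivity) hcount (fun j hj => (mem_filter.1 hj).2.2) hK)
    _ = n + 1 := by rw [ENNReal.ofReal_add (by positivity) zero_le_one]; simp

end BH

section Measurability

theorem measurable_of_countable_cases {α β ι : Type*} [MeasurableSpace α] [MeasurableSpace β]
    [Countable ι] {s : α → ι} (hs : ∀ i, MeasurableSet {x | s x = i}) {g : ι → α → β}
    (hg : ∀ i, Measurable (g i)) : Measurable fun x => g (s x) x := by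
  intro B hB
  have h : (fun x => g (s x) x) ⁻¹' B = ⋃ i, {x | s x = i} ∩ g i ⁻¹' B := by
    ext x
    simp
  rw [h]
  exact .iUnion fun i => (hs i).inter (hg i hB)

theorem measurableSet_sort_eq {β α : Type*} [MeasurableSpace β] [LinearOrder α]
    [TopologicalSpace α] [OrderClosedTopology α] [SecondCountableTopology α] [MeasurableSpace α]
    [BorelSpace α] {N : ℕ} {w : β → Fin N → α} (hw : ∀ k, Measurable fun b => w b k)
    (π : Equiv.Perm (Fin N)) : MeasurableSet {b | Tuple.sort (w b) = π} := by
  simp_rw [eq_comm (a := Tuple.sort _), Tuple.eq_sort_iff, Monotone, Function.comp_apply]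
  refine measurableSet_setOfPred.2 (.and ?_ ?_) <;>
    refine .forall fun i => .forall fun j => .imp measurable_const ?_
  · exact measurableSet_setOfPred.1 (measurableSet_le (hw _) (hw _))
  · exact .imp (measurableSet_setOfPred.1 (measurableSet_eq_fun (hw _) (hw _))) measurable_const

theorem map_eq_pi_of_iIndepFun {Ω ι β : Type*} [Fintype ι] [MeasurableSpace Ω]
    [MeasurableSpace β] {μ : Measure Ω} [IsProbabilityMeasure μ] {f : ι → Ω → β}
    (hf : ∀ i, Measurable (f i)) (hind : iIndepFun f μ) (i₀ : ι)
    (hid : ∀ i, μ.map (f i) = μ.map (f i₀)) :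
    μ.map (fun ω i => f i ω) = Measure.pi fun _ => μ.map (f i₀) := by
  rw [(iIndepFun_iff_map_fun_eq_pi_map fun i => (hf i).aemeasurable).1 hind]
  simp_rw [hid]

theorem card_mul_lintegral_le_of_sum_comp_perm_le {ι κ β : Type*} [Fintype ι]
    [MeasurableSpace β] (ν : Measure β) [IsProbabilityMeasure ν] {f : (ι → β) → ℝ≥0∞}
    (hf : Measurable f) (C : Finset κ) (e : κ → Equiv.Perm ι) {c : ℝ≥0∞}
    (h : ∀ᵐ v ∂Measure.pi fun _ => ν, ∑ j ∈ C, f (v ∘ e j) ≤ c) :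
    #C * ∫⁻ v, f v ∂Measure.pi (fun _ => ν) ≤ c := by
  have hcomp : ∀ σ : Equiv.Perm ι, Measurable fun v : ι → β => f (v ∘ σ) := fun σ =>
    hf.comp (measurable_pi_lambda _ fun i => measurable_pi_apply (σ i))
  have hperm : ∀ σ : Equiv.Perm ι,
      ∫⁻ v, f (v ∘ σ) ∂Measure.pi (fun _ => ν) = ∫⁻ v, f v ∂Measure.pi (fun _ => ν) := fun σ =>
    (measurePreserving_arrowCongr' (fun _ => ν) (fun _ => ν) σ.symm (MeasurableEquiv.refl β)
      fun _ => .id ν).lintegral_comp hf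
  calc #C * ∫⁻ v, f v ∂Measure.pi (fun _ => ν)
      = ∑ j ∈ C, ∫⁻ v, f (v ∘ e j) ∂Measure.pi (fun _ => ν) := by
        rw [sum_congr rfl fun j _ => hperm (e j), sum_const, nsmul_eq_mul]
    _ = ∫⁻ v, ∑ j ∈ C, f (v ∘ e j) ∂Measure.pi (fun _ => ν) :=
        (lintegral_finsetSum _ fun j _ => hcomp (e j)).symm
    _ ≤ ∫⁻ _, c ∂Measure.pi (fun _ => ν) := lintegral_mono_ae h
    _ = c := by simp

end Measurability

section BHMeasurability

variable {𝓧 : Type*} [MeasurableSpace 𝓧] {n m : ℕ} {μhat : 𝓧 → ℝ}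

theorem measurable_clippedScore_apply {ι : Type*} [DecidableEq ι] (S : Finset ι)
    (hμhat : Measurable μhat) (k : ι) :
    Measurable fun v : ι → 𝓧 × ℝ => clippedScore S μhat v k := by
  refine Measurable.ite (measurableSet_setOfPred.2 (measurable_const.and ?_)) measurable_const
    (measurable_coe_real_ereal.comp (hμhat.comp (measurable_pi_apply k).fst).neg)
  exact measurableSet_setOfPred.1 (measurableSet_lt measurable_const (measurable_pi_apply k).snd)

theorem measurable_eValueAt (α : ℝ) (hμhat : Measurable μhat) (p : Fin (n + m))
    (π : Equiv.Perm (Fin (n + m))) : Measurable (eValueAt n m α μhat p π) := by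
  have hw := measurable_clippedScore_apply (calib n m) hμhat
  refine Measurable.mul (Measurable.div_const (Measurable.const_mul ?_ _) _) ?_
  · exact Measurable.ite (measurableSet_le (hw p) (measurable_sortedScore hw π _))
      measurable_const measurable_const
  · exact Measurable.ite (measurableSet_le (measurable_pi_apply p).snd measurable_const)
      measurable_const measurable_const

theorem measurable_nullEValue (α : ℝ) (hμhat : Measurable μhat) (p : Fin (n + m)) :
    Measurable (nullEValue n m α μhat p) :=
  ENNReal.measurable_ofReal.comp <| measurable_of_countable_cases
    (measurableSet_sort_eq (measurable_clippedScore_apply (calib n m) hμhat))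
    (measurable_eValueAt α hμhat p)

theorem lintegral_nullEValue_le_one (α : ℝ) (hμhat : Measurable μhat) (ν : Measure (𝓧 × ℝ))
    [IsProbabilityMeasure ν]
    (hv : ∀ᵐ v ∂Measure.pi fun _ : Fin (n + m) => ν,
      ∀ k k', k ≠ k' → μhat (v k).1 ≠ μhat (v k').1)
    {p : Fin (n + m)} (hp : n ≤ (p : ℕ)) :
    ∫⁻ v, nullEValue n m α μhat p v ∂Measure.pi (fun _ => ν) ≤ 1 := by
  have hcard : #(insert p (calib n m)) = n + 1 := by
    rw [card_insert_of_notMem (by simp [calib, hp]), calib, Fin.card_filter_val_lt]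
    omega
  have h := card_mul_lintegral_le_of_sum_comp_perm_le ν (measurable_nullEValue α hμhat p)
    (insert p (calib n m)) (fun j => Equiv.swap j p)
    (hv.mono fun v hv => sum_nullEValue_comp_swap_le hv hp)
  rw [hcard, Nat.cast_add, Nat.cast_one] at h
  exact (ENNReal.mul_le_mul_iff_right (a := (n : ℝ≥0∞) + 1) (by simp) (by simp)).1
    (by rwa [mul_one])

theorem lintegral_nullEValue_le_one_of_iIndepFun (α : ℝ) (hμhat : Measurable μhat)
    {Ω : Type*} [MeasurableSpace Ω] {μ : Measure Ω} [IsProbabilityMeasure μ]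
    {D : Fin (n + m) → Ω → 𝓧 × ℝ} (hD : ∀ k, Measurable (D k)) (hind : iIndepFun D μ)
    (hid : ∀ k k', μ.map (D k) = μ.map (D k'))
    (hdistinct : ∀ᵐ ω ∂μ, ∀ k k', k ≠ k' → μhat (D k ω).1 ≠ μhat (D k' ω).1)
    {p : Fin (n + m)} (hp : n ≤ (p : ℕ)) :
    ∫⁻ ω, nullEValue n m α μhat p (fun k => D k ω) ∂μ ≤ 1 := by
  have hdata : Measurable fun ω k => D k ω := measurable_pi_lambda _ hD
  have hlaw := map_eq_pi_of_iIndepFun hD hind p fun k => hid k p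
  have := Measure.isProbabilityMeasure_map (μ := μ) (hD p).aemeasurable
  have hdistinct' : ∀ᵐ v ∂μ.map fun ω k => D k ω,
      ∀ k k', k ≠ k' → μhat (v k).1 ≠ μhat (v k').1 := by
    refine (ae_map_iff hdata.aemeasurable (measurableSet_setOfPred.2 <| .forall fun k => .forall
      fun k' => .imp measurable_const (.not (measurableSet_setOfPred.1 ?_)))).2 hdistinct
    exact measurableSet_eq_fun (hμhat.comp (measurable_pi_apply k).fst)
      (hμhat.comp (measurable_pi_apply k').fst)
  rw [← lintegral_map (measurable_nullEValue α hμhat p) hdata]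
  rw [hlaw] at hdistinct' ⊢
  exact lintegral_nullEValue_le_one α hμhat _ hdistinct' hp

end BHMeasurability

section StoppingTime

theorem measurable_card_fst_eq_one {N : ℕ} {β : Type*} [MeasurableSpace β] (t : ℕ) :
    Measurable fun u : Fin N → ℕ × β => #{s : Fin N | t ≤ (s : ℕ) ∧ (u s).1 = 1} :=
  (measurable_of_countable fun c : Fin N → ℕ => #{s : Fin N | t ≤ (s : ℕ) ∧ c s = 1}).comp
    (measurable_pi_lambda _ fun s => (measurable_pi_apply s).fst)

/-- `bhTime` only looks at the counts of calibration scores above each `t' ≥ t`, which the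
reverse filtration at time `t` reveals. -/
theorem measurableSet_le_bhTime {Ω 𝓩 : Type*} [MeasurableSpace 𝓩] (n m : ℕ) (α : ℝ)
    (π : Ω → Equiv.Perm (Fin (n + m))) (z : Ω → Fin (n + m) → 𝓩) (t : ℕ) :
    MeasurableSet[MeasurableSpace.comap (fun ω => fun s : Fin (n + m) =>
        ((if t ≤ (s : ℕ) then (if (π ω s : ℕ) < n then (1 : ℕ) else 0) else 0), z ω s))
      inferInstance] {ω | t ≤ bhTime n m α (π ω)} := by
  set G := fun ω => fun s : Fin (n + m) =>
    ((if t ≤ (s : ℕ) then (if (π ω s : ℕ) < n then (1 : ℕ) else 0) else 0), z ω s)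
  rcases t.eq_zero_or_pos with rfl | ht
  · simp
  have hcount : ∀ t' ≥ t, Measurable[MeasurableSpace.comap G inferInstance]
      fun ω => calCountAbove n m (π ω) t' := by
    intro t' ht'
    have hfac : ∀ ω, calCountAbove n m (π ω) t' =
        #{s : Fin (n + m) | t' ≤ (s : ℕ) ∧ (G ω s).1 = 1} := fun ω =>
      congrArg card <| filter_congr fun s _ => by
        by_cases hs : t' ≤ (s : ℕ)
        · simp only [G, hs, if_pos (ht'.trans hs), true_and]
          split_ifs <;> simp [*]
        · simp [hs]
    rw [funext hfac]
    exact (measurable_card_fst_eq_one t').comp (comap_measurable G)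
  have hset : {ω | t ≤ bhTime n m α (π ω)} = ⋃ t' ∈ Icc t (n + m),
      {ω | bhCriterion n m α t' (n - calCountAbove n m (π ω) t')} := by
    ext ω
    simp only [Set.mem_ofPred_eq, bhTime, le_lastTime_iff ht, Set.mem_iUnion, exists_prop,
      calCountBelow_eq_sub]
  rw [hset]
  exact .biUnion (Set.to_countable _) fun t' ht' =>
    hcount t' (mem_Icc.1 ht').1 (.of_discrete (s := {c | bhCriterion n m α t' (n - c)}))

end StoppingTime

end ConformalBH

open ConformalBH in
theorem stmt_1_general {Ω 𝓩 𝓧 : Type*} [MeasureSpace Ω] [IsProbabilityMeasure (volume : Measure Ω)]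
    [MeasurableSpace 𝓩] [MeasurableSpace 𝓧]
    (n m : ℕ) (α : ℝ)
    (Z : ℕ → Ω → 𝓩) (X : ℕ → Ω → 𝓧) (Y : ℕ → Ω → ℝ)
    (hmeas : ∀ i, Measurable fun ω => (Z i ω, X i ω, Y i ω))
    (hiid : iIndepFun
      (fun i : Fin (n + m) => fun ω => (Z i ω, X i ω, Y i ω)) volume)
    (hid : ∀ i j : Fin (n + m),
      Measure.map (fun ω => (Z (i : ℕ) ω, X (i : ℕ) ω, Y (i : ℕ) ω)) volume =
        Measure.map (fun ω => (Z (j : ℕ) ω, X (j : ℕ) ω, Y (j : ℕ) ω)) volume)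
    (μhat : 𝓧 → ℝ) (hμhat : Measurable μhat)
    (hdistinct : ∀ᵐ ω ∂volume, ∀ i j : Fin (n + m), i ≠ j →
      μhat (X (i : ℕ) ω) ≠ μhat (X (j : ℕ) ω))
    (W : ℕ → Ω → EReal)
    (hWcal : ∀ i < n, ∀ ω, W i ω =
      if 0 < Y i ω then (⊤ : EReal) else ((-μhat (X i ω) : ℝ) : EReal))
    (hWtest : ∀ i < m, ∀ ω, W (n + i) ω = ((-μhat (X (n + i) ω) : ℝ) : EReal))
    (πsort : Ω → Equiv.Perm (Fin (n + m)))
    (hsort : ∀ ω, ∀ s s' : Fin (n + m), s < s' →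
      W (πsort ω s : ℕ) ω < W (πsort ω s' : ℕ) ω ∨
        (W (πsort ω s : ℕ) ω = W (πsort ω s' : ℕ) ω ∧ (πsort ω s : ℕ) < (πsort ω s' : ℕ)))
    (Wsorted : ℕ → Ω → EReal)
    (hWsorted0 : ∀ ω, Wsorted 0 ω = ⊥)
    (hWsorted : ∀ t : ℕ, ∀ h : t < n + m, ∀ ω, Wsorted (t + 1) ω = W (πsort ω ⟨t, h⟩ : ℕ) ω)
    (cB : ℕ → Ω → ℕ)
    (hcB : ∀ t ω, cB t ω =
      (Finset.univ.filter fun s : Fin (n + m) =>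
        (s : ℕ) < t ∧ (πsort ω s : ℕ) < n).card)
    (Ncal : ℕ → Ω → ℕ)
    (hNcal : ∀ t ω, Ncal t ω =
      (Finset.univ.filter fun s : Fin (n + m) =>
        t ≤ (s : ℕ) ∧ (πsort ω s : ℕ) < n).card)
    (F : ℕ → MeasurableSpace Ω)
    (hF : ∀ t, F t = MeasurableSpace.comap
      (fun ω => fun s : Fin (n + m) =>
        ((if t ≤ (s : ℕ) then (if (πsort ω s : ℕ) < n then (1 : ℕ) else 0) else 0),
          Z (πsort ω s : ℕ) ω)) inferInstance)
    (τBH : Ω → ℕ)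
    (hτBH : ∀ ω, τBH ω = sSup {t : ℕ | 1 ≤ t ∧ t ≤ n + m ∧
      (m : ℝ) / ((n : ℝ) + 1) * (1 + (cB t ω : ℝ)) / max 1 ((t : ℝ) - (cB t ω : ℝ)) ≤ α})
    (evals : ℕ → Ω → ℝ)
    (heval : ∀ i ω, evals i ω =
      ((n : ℝ) + 1) * (if W (n + i) ω ≤ Wsorted (τBH ω) ω then 1 else 0) /
        (1 + (n : ℝ) - (Ncal (τBH ω) ω : ℝ))) :
    (∀ t, MeasurableSet[F t] {ω | t ≤ τBH ω}) ∧
    (∀ i < m,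
      ∫⁻ ω, ENNReal.ofReal (evals i ω * (if Y (n + i) ω ≤ 0 then 1 else 0)) ∂volume ≤ 1) := by
  have hτ : ∀ ω, τBH ω = bhTime n m α (πsort ω) := fun ω => by
    simp only [hτBH, hcB]
    rfl
  refine ⟨fun t => ?_, fun i hi => ?_⟩
  · rw [hF]
    simpa only [hτ] using measurableSet_le_bhTime n m α πsort (fun ω s => Z (πsort ω s) ω) t
  have hscore : ∀ ω, clippedScore (calib n m) μhat (fun k => (X k ω, Y k ω)) =
      fun k : Fin (n + m) => W k ω := fun ω =>
    clippedScore_calib_eq (fun i hi => hWcal i hi ω) (fun i hi => hWtest i hi ω)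
  have hsorted : ∀ ω, Tuple.sort (fun k : Fin (n + m) => W k ω) = πsort ω := fun ω =>
    (eq_sort_of_lt_or_eq_and_lt (w := fun k : Fin (n + m) => W k ω) (hsort ω)).symm
  have hWs : ∀ ω,
      Wsorted (τBH ω) ω = sortedScore (fun k : Fin (n + m) => W k ω) (πsort ω) (τBH ω) :=
    fun ω => eq_sortedScore (Ws := fun t => Wsorted t ω) (hWsorted0 ω) (fun t h => hWsorted t h ω)
      (hτ ω ▸ bhTime_le _)
  have hidXY : ∀ k k' : Fin (n + m), volume.map (fun ω => (X k ω, Y k ω)) =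
      volume.map (fun ω => (X k' ω, Y k' ω)) := fun k k' => by
    simpa only [Measure.map_map measurable_snd (hmeas _), Function.comp_def] using
      congrArg (Measure.map Prod.snd) (hid k k')
  calc ∫⁻ ω, ENNReal.ofReal (evals i ω * (if Y (n + i) ω ≤ 0 then 1 else 0)) ∂volume
      = ∫⁻ ω, nullEValue n m α μhat ⟨n + i, by omega⟩ (fun k => (X k ω, Y k ω)) ∂volume := by
        refine lintegral_congr fun ω => ?_
        rw [nullEValue, eValueAt, hscore, hsorted, heval, hWs, hNcal, hτ]
        rfl
    _ ≤ 1 := lintegral_nullEValue_le_one_of_iIndepFun α hμhat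
        (fun k => measurable_snd.comp (hmeas k))
        (hiid.comp (fun _ => Prod.snd) fun _ => measurable_snd) hidXY hdistinct
        (p := ⟨n + i, by omega⟩) (Nat.le_add_right n i)

/-- The BH stopping time is a stopping time of the reverse filtration, and consequently
the conformal e-values stopped at `τ_BH` are valid e-values for the random null events
`{Y_{n+i} ≤ 0}`.

Setup (with 0-based indexing: data points `0,…,n-1` are calibration points, `n,…,n+m-1`
are test points, and sorted rank `t+1` of the paper corresponds to `πsort ω ⟨t⟩`):
i.i.d. triples `(Z i, X i, Y i)`; a fitted model `μhat` whose values on the `X i` are a.s.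
pairwise distinct; clipped scores `W`; sorting permutation `πsort` (ties broken by index);
sorted scores `Wsorted` with `Wsorted 0 = ⊥`; `cB t = ∑_{s=1}^t B_s`, the number of
calibration scores among the `t` smallest; `Ncal t = N_t^calib-above`; the reverse
filtration `F t = σ(B_{t+1}, …, B_{n+m}, Z^( ))`; the BH stopping time
`τ_BH = max{t ∈ {1,…,n+m} : (m/(n+1))·(1 + ∑_{s≤t} B_s)/max(1, ∑_{s≤t}(1-B_s)) ≤ α}`
(`τ_BH = 0` if the set is empty); and the stopped e-values
`e_i^{(τ_BH)} = (n+1)·1{V̂_i ≤ W_(τ_BH)}/(1 + n - N_{τ_BH})`. -/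
theorem stmt_1 {Ω 𝓩 𝓧 : Type*} [MeasureSpace Ω] [IsProbabilityMeasure (volume : Measure Ω)]
    [MeasurableSpace 𝓩] [MeasurableSpace 𝓧]
    (n m : ℕ) (hm : 1 ≤ m) (α : ℝ) (hα : α ∈ Set.Ioo (0 : ℝ) 1)
    (Z : ℕ → Ω → 𝓩) (X : ℕ → Ω → 𝓧) (Y : ℕ → Ω → ℝ)
    (hmeas : ∀ i, Measurable fun ω => (Z i ω, X i ω, Y i ω))
    (hiid : iIndepFun
      (fun i : Fin (n + m) => fun ω => (Z i ω, X i ω, Y i ω)) volume)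
    (hid : ∀ i j : Fin (n + m),
      Measure.map (fun ω => (Z (i : ℕ) ω, X (i : ℕ) ω, Y (i : ℕ) ω)) volume =
        Measure.map (fun ω => (Z (j : ℕ) ω, X (j : ℕ) ω, Y (j : ℕ) ω)) volume)
    (μhat : 𝓧 → ℝ) (hμhat : Measurable μhat)
    (hdistinct : ∀ᵐ ω ∂volume, ∀ i j : Fin (n + m), i ≠ j →
      μhat (X (i : ℕ) ω) ≠ μhat (X (j : ℕ) ω))
    (W : ℕ → Ω → EReal)
    (hWcal : ∀ i < n, ∀ ω, W i ω =
      if 0 < Y i ω then (⊤ : EReal) else ((-μhat (X i ω) : ℝ) : EReal))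
    (hWtest : ∀ i < m, ∀ ω, W (n + i) ω = ((-μhat (X (n + i) ω) : ℝ) : EReal))
    (πsort : Ω → Equiv.Perm (Fin (n + m)))
    (hπmeas : ∀ s, Measurable fun ω => πsort ω s)
    (hsort : ∀ ω, ∀ s s' : Fin (n + m), s < s' →
      W (πsort ω s : ℕ) ω < W (πsort ω s' : ℕ) ω ∨
        (W (πsort ω s : ℕ) ω = W (πsort ω s' : ℕ) ω ∧ (πsort ω s : ℕ) < (πsort ω s' : ℕ)))
    (Wsorted : ℕ → Ω → EReal)
    (hWsorted0 : ∀ ω, Wsorted 0 ω = ⊥)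
    (hWsorted : ∀ t : ℕ, ∀ h : t < n + m, ∀ ω, Wsorted (t + 1) ω = W (πsort ω ⟨t, h⟩ : ℕ) ω)
    (cB : ℕ → Ω → ℕ)
    (hcB : ∀ t ω, cB t ω =
      (Finset.univ.filter fun s : Fin (n + m) =>
        (s : ℕ) < t ∧ (πsort ω s : ℕ) < n).card)
    (Ncal : ℕ → Ω → ℕ)
    (hNcal : ∀ t ω, Ncal t ω =
      (Finset.univ.filter fun s : Fin (n + m) =>
        t ≤ (s : ℕ) ∧ (πsort ω s : ℕ) < n).card)
    (F : ℕ → MeasurableSpace Ω)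
    (hF : ∀ t, F t = MeasurableSpace.comap
      (fun ω => fun s : Fin (n + m) =>
        ((if t ≤ (s : ℕ) then (if (πsort ω s : ℕ) < n then (1 : ℕ) else 0) else 0),
          Z (πsort ω s : ℕ) ω)) inferInstance)
    (τBH : Ω → ℕ)
    (hτBH : ∀ ω, τBH ω = sSup {t : ℕ | 1 ≤ t ∧ t ≤ n + m ∧
      (m : ℝ) / ((n : ℝ) + 1) * (1 + (cB t ω : ℝ)) / max 1 ((t : ℝ) - (cB t ω : ℝ)) ≤ α})
    (evals : ℕ → Ω → ℝ)
    (heval : ∀ i ω, evals i ω =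
      ((n : ℝ) + 1) * (if W (n + i) ω ≤ Wsorted (τBH ω) ω then 1 else 0) /
        (1 + (n : ℝ) - (Ncal (τBH ω) ω : ℝ))) :
    (∀ t, MeasurableSet[F t] {ω | t ≤ τBH ω}) ∧
    (∀ i < m,
      ∫⁻ ω, ENNReal.ofReal (evals i ω * (if Y (n + i) ω ≤ 0 then 1 else 0)) ∂volume ≤ 1) :=
  stmt_1_general n m α Z X Y hmeas hiid hid μhat hμhat hdistinct W hWcal hWtest πsort hsort Wsorted
    hWsorted0 hWsorted cB hcB Ncal hNcal F hF τBH hτBH evals heval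
end

section
/- Let e_1, …, e_m be nonnegative random variables and Y_1, …, Y_m real random variables on a common probability space such that E[e_i · 1{Y_i ≤ 0}] ≤ 1 for every i = 1, …, m, and let α ∈ (0,1). Let R be a random subset of {1, …, m} (i.e., each indicator 1{i ∈ R} is a random variable) that is almost surely self-consistent with respect to e_1, …, e_m at level α. Then E[ #{i ∈ R : Y_i ≤ 0} / max(1, |R|) ] ≤ α. -/
open MeasureTheory Finset

/- Self-consistency bounds the false discovery proportion pointwise: every null selected
in `R` carries an e-value of at least `m / (α |R|)`, so
`#{i ∈ R null} / |R| ≤ (α / m) ∑_{i null} e_i`. Taking expectations, each of the `m` terms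
`E[e_i 1{Y_i ≤ 0}]` is at most `1`, which leaves `α`. -/

def IsSelfConsistent {ι : Type*} [Fintype ι] (α : ℝ) (e : ι → ℝ) (R : Finset ι) : Prop :=
  ∀ i ∈ R, (Fintype.card ι : ℝ) / (α * #R) ≤ e i

theorem IsSelfConsistent.ofReal_fdp_le {ι : Type*} [Fintype ι] {α : ℝ} (hα : 0 < α)
    {e : ι → ℝ} {R : Finset ι} (hR : IsSelfConsistent α e R) (p : ι → Prop) [DecidablePred p] :
    ENNReal.ofReal (#(R.filter p) / max 1 (#R : ℝ))
      ≤ ENNReal.ofReal (α / Fintype.card ι) * ∑ i ∈ univ.filter p, ENNReal.ofReal (e i) := by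
  rcases R.eq_empty_or_nonempty with rfl | hne
  · simp
  set n : ℝ := (Fintype.card ι : ℝ)
  set r : ℝ := (#R : ℝ)
  set k : ℕ := #(R.filter p)
  have hr : 0 < r := by simpa [r] using hne.card_pos
  have hn : 0 < n := by simpa [n] using hne.card_pos.trans_le (card_le_univ R)
  have hsum : k * ENNReal.ofReal (n / (α * r)) ≤ ∑ i ∈ univ.filter p, ENNReal.ofReal (e i) :=
    calc k * ENNReal.ofReal (n / (α * r))
        = ∑ _i ∈ R.filter p, ENNReal.ofReal (n / (α * r)) := by rw [sum_const, nsmul_eq_mul]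
      _ ≤ ∑ i ∈ R.filter p, ENNReal.ofReal (e i) :=
        sum_le_sum fun i hi => ENNReal.ofReal_le_ofReal (hR i (mem_filter.1 hi).1)
      _ ≤ ∑ i ∈ univ.filter p, ENNReal.ofReal (e i) :=
        sum_le_sum_of_subset (filter_subset_filter p (subset_univ R))
  calc ENNReal.ofReal (k / max 1 r)
      = ENNReal.ofReal (α / n) * (k * ENNReal.ofReal (n / (α * r))) := by
        rw [max_eq_right (by simpa [r] using hne.card_pos), ← ENNReal.ofReal_natCast,
          ← ENNReal.ofReal_mul k.cast_nonneg, ← ENNReal.ofReal_mul (by positivity)]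
        congr 1
        field_simp
    _ ≤ _ := by gcongr

theorem ENNReal.ofReal_div_natCast_mul_le {a : ℝ} (n : ℕ) :
    ENNReal.ofReal (a / n) * n ≤ ENNReal.ofReal a := by
  rcases n.eq_zero_or_pos with rfl | hn
  · simp
  rw [← ENNReal.ofReal_natCast, ← ENNReal.ofReal_mul' n.cast_nonneg,
    div_mul_cancel₀ a (by positivity)]

theorem stmt_2_general {Ω : Type*} [MeasureSpace Ω]
    (m : ℕ) (α : ℝ) (hα : α ∈ Set.Ioo (0 : ℝ) 1)
    (e : Fin m → Ω → ℝ) (Y : Fin m → Ω → ℝ)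
    (hemeas : ∀ i, Measurable (e i)) (hYmeas : ∀ i, Measurable (Y i))
    (he : ∀ i, ∫⁻ ω, ENNReal.ofReal (e i ω * (if Y i ω ≤ 0 then 1 else 0)) ∂volume ≤ 1)
    (R : Ω → Finset (Fin m))
    (hsc : ∀ᵐ ω ∂volume, ∀ i ∈ R ω, (m : ℝ) / (α * ((R ω).card : ℝ)) ≤ e i ω) :
    ∫⁻ ω, ENNReal.ofReal
        ((((R ω).filter fun i => Y i ω ≤ 0).card : ℝ) / max 1 ((R ω).card : ℝ)) ∂volume
      ≤ ENNReal.ofReal α := by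
  have hnull : ∀ ω, ∑ i ∈ univ.filter (fun i => Y i ω ≤ 0), ENNReal.ofReal (e i ω)
      = ∑ i, ENNReal.ofReal (e i ω * (if Y i ω ≤ 0 then 1 else 0)) := fun ω => by
    rw [sum_filter]
    congr! 1 with i
    split_ifs <;> simp
  have hfdp : ∀ᵐ ω, ENNReal.ofReal
        ((((R ω).filter fun i => Y i ω ≤ 0).card : ℝ) / max 1 ((R ω).card : ℝ))
      ≤ ENNReal.ofReal (α / m) * ∑ i, ENNReal.ofReal (e i ω * (if Y i ω ≤ 0 then 1 else 0)) := by
    filter_upwards [hsc] with ω hω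
    have hω' : IsSelfConsistent α (fun i => e i ω) (R ω) := by
      rwa [IsSelfConsistent, Fintype.card_fin]
    have hbound := hω'.ofReal_fdp_le hα.1 (fun i => Y i ω ≤ 0)
    rwa [Fintype.card_fin, hnull] at hbound
  calc _ ≤ ∫⁻ ω, ENNReal.ofReal (α / m) *
          ∑ i, ENNReal.ofReal (e i ω * (if Y i ω ≤ 0 then 1 else 0)) := lintegral_mono_ae hfdp
    _ = ENNReal.ofReal (α / m) *
          ∑ i, ∫⁻ ω, ENNReal.ofReal (e i ω * (if Y i ω ≤ 0 then 1 else 0)) := by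
      have hmeas : ∀ i, Measurable fun ω =>
          ENNReal.ofReal (e i ω * (if Y i ω ≤ 0 then 1 else 0)) := fun i =>
        ((hemeas i).mul (Measurable.ite (measurableSet_le (hYmeas i) measurable_const)
          measurable_const measurable_const)).ennreal_ofReal
      rw [lintegral_const_mul' _ _ ENNReal.ofReal_ne_top,
        lintegral_finsetSum _ fun i _ => hmeas i]
    _ ≤ ENNReal.ofReal (α / m) * m := by
      gcongr
      exact (sum_le_sum fun i _ => he i).trans (by simp)
    _ ≤ ENNReal.ofReal α := ENNReal.ofReal_div_natCast_mul_le m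

/-- FDR control of self-consistent selection sets with respect to e-values for the random
null events `{Y i ≤ 0}`: if `E[e i · 1{Y i ≤ 0}] ≤ 1` for every `i` and the random set `R`
is almost surely self-consistent (`e i ≥ m/(α·|R|)` for all `i ∈ R`), then
`E[#{i ∈ R : Y i ≤ 0}/max(1,|R|)] ≤ α`. -/
theorem stmt_2 {Ω : Type*} [MeasureSpace Ω] [IsProbabilityMeasure (volume : Measure Ω)]
    (m : ℕ) (hm : 1 ≤ m) (α : ℝ) (hα : α ∈ Set.Ioo (0 : ℝ) 1)
    (e : Fin m → Ω → ℝ) (Y : Fin m → Ω → ℝ)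
    (hemeas : ∀ i, Measurable (e i)) (hYmeas : ∀ i, Measurable (Y i))
    (henonneg : ∀ i ω, 0 ≤ e i ω)
    (he : ∀ i, ∫⁻ ω, ENNReal.ofReal (e i ω * (if Y i ω ≤ 0 then 1 else 0)) ∂volume ≤ 1)
    (R : Ω → Finset (Fin m))
    (hRmeas : ∀ i, MeasurableSet {ω | i ∈ R ω})
    (hsc : ∀ᵐ ω ∂volume, ∀ i ∈ R ω, (m : ℝ) / (α * ((R ω).card : ℝ)) ≤ e i ω) :
    ∫⁻ ω, ENNReal.ofReal
        ((((R ω).filter fun i => Y i ω ≤ 0).card : ℝ) / max 1 ((R ω).card : ℝ)) ∂volume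
      ≤ ENNReal.ofReal α :=
  stmt_2_general m α hα e Y hemeas hYmeas he R hsc
end

section
/- Let (u_1, …, u_{n+1}) be an exchangeable random vector with values in {0,1}^{n+1} such that Σ_{s=1}^{n+1} u_s = n almost surely (i.e., it contains exactly n ones). Fix t with 0 ≤ t ≤ n and set V := Σ_{s=1}^{t+1} u_s. Then, almost surely, P(u_{t+1} = 1 ∣ u_{t+2}, …, u_{n+1}) = V/(t+1). -/
open MeasureTheory Finset

/-!
Condition on the tail `u_{t+2}, …, u_{n+1}`. Swapping two of the first `t + 1` coordinates fixes
the tail, so by exchangeability all of `u_1, …, u_{t+1}` have the same integral over every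
tail-measurable set, hence the same conditional expectation, which must then be their average
`E[V | tail] / (t + 1)`. Finally `V = n - (u_{t+2} + ⋯ + u_{n+1})` almost surely is itself
tail-measurable.
-/

section ConditionalAverage

variable {Ω ι : Type*} {m m₀ : MeasurableSpace Ω} {μ : Measure Ω}

theorem condExp_ae_eq_average_of_setIntegral_eq (hm : m ≤ m₀) [SigmaFinite (μ.trim hm)]
    {f : ι → Ω → ℝ} {S : Finset ι} {j : ι} (hj : j ∈ S) (hf : ∀ i ∈ S, Integrable (f i) μ)
    (hfS : AEStronglyMeasurable[m] (fun ω => ∑ i ∈ S, f i ω) μ)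
    (hsymm : ∀ i ∈ S, ∀ A, MeasurableSet[m] A → ∫ ω in A, f i ω ∂μ = ∫ ω in A, f j ω ∂μ) :
    μ[f j | m] =ᵐ[μ] fun ω => (∑ i ∈ S, f i ω) / #S := by
  have hS : (#S : ℝ) ≠ 0 := by exact_mod_cast (card_pos.mpr ⟨j, hj⟩).ne'
  refine (ae_eq_condExp_of_forall_setIntegral_eq hm (hf j hj)
    (fun A _ _ => ((integrable_finsetSum S hf).div_const _).integrableOn)
    (fun A hA _ => ?_) (by simpa only [div_eq_mul_inv] using hfS.mul_const _)).symm
  calc ∫ ω in A, (∑ i ∈ S, f i ω) / #S ∂μ = (∑ i ∈ S, ∫ ω in A, f i ω ∂μ) / #S := by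
        rw [integral_div, integral_finsetSum S fun i hi => (hf i hi).integrableOn]
    _ = ∫ ω in A, f j ω ∂μ := by
        rw [sum_congr rfl fun i hi => hsymm i hi A hA, sum_const, nsmul_eq_mul,
          mul_div_cancel_left₀ _ hS]

end ConditionalAverage

section Exchangeable

variable {Ω ι α β : Type*} [MeasurableSpace Ω] {μ : Measure Ω} [MeasurableSpace α]
  [MeasurableSpace β]

theorem setIntegral_comp_perm_eq {X : ι → Ω → α} (hX : ∀ s, Measurable (X s))
    {π : Equiv.Perm ι} (hπ : μ.map (fun ω s => X (π s) ω) = μ.map (fun ω s => X s ω))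
    {M : (ι → α) → β} (hM : Measurable M) (hMπ : ∀ v, M (v ∘ π) = M v)
    {g : (ι → α) → ℝ} (hg : Measurable g) {A : Set Ω}
    (hA : MeasurableSet[MeasurableSpace.comap (fun ω => M fun s => X s ω) inferInstance] A) :
    ∫ ω in A, g (fun s => X (π s) ω) ∂μ = ∫ ω in A, g (fun s => X s ω) ∂μ := by
  obtain ⟨B, hB, rfl⟩ := hA
  have hpre : (fun ω => M fun s => X s ω) ⁻¹' B = (fun ω s => X (π s) ω) ⁻¹' (M ⁻¹' B) := by
    ext ω
    simp only [Set.mem_preimage]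
    exact Iff.of_eq (congrArg (· ∈ B) (hMπ fun s => X s ω).symm)
  calc ∫ ω in (fun ω => M fun s => X s ω) ⁻¹' B, g (fun s => X (π s) ω) ∂μ
      = ∫ v in M ⁻¹' B, g v ∂μ.map (fun ω s => X (π s) ω) := by
        rw [hpre, setIntegral_map (hM hB) hg.aestronglyMeasurable
          (measurable_pi_lambda _ fun s => hX (π s)).aemeasurable]
    _ = ∫ ω in (fun ω => M fun s => X s ω) ⁻¹' B, g (fun s => X s ω) ∂μ := by
        rw [hπ, setIntegral_map (hM hB) hg.aestronglyMeasurable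
          (measurable_pi_lambda _ hX).aemeasurable]
        rfl

end Exchangeable

section ZeroOutside

variable {ι α : Type*} (p : ι → Prop) [DecidablePred p]

def zeroOutside [Zero α] (v : ι → α) : ι → α := fun s => if p s then v s else 0

theorem measurable_zeroOutside [Zero α] [MeasurableSpace α] :
    Measurable (zeroOutside p : (ι → α) → ι → α) :=
  measurable_pi_lambda _ fun s => by
    by_cases h : p s <;> simp [zeroOutside, h, measurable_pi_apply]

theorem zeroOutside_comp_perm [Zero α] {π : Equiv.Perm ι} (hπ : ∀ s, p s → π s = s)
    (v : ι → α) : zeroOutside p (v ∘ π) = zeroOutside p v :=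
  funext fun s => by
    by_cases h : p s
    · simp [zeroOutside, h, hπ s h]
    · simp [zeroOutside, h]

variable {Ω : Type*} [MeasurableSpace Ω] {μ : Measure Ω} {u : ι → Ω → ℕ}

theorem setIntegral_natCast_eq_of_swap [DecidableEq ι] (hu : ∀ s, Measurable (u s)) {i j : ι}
    (hswap : μ.map (fun ω s => u (Equiv.swap i j s) ω) = μ.map (fun ω s => u s ω))
    (hi : ¬ p i) (hj : ¬ p j) {A : Set Ω}
    (hA : MeasurableSet[MeasurableSpace.comap (fun ω => zeroOutside p fun s => u s ω)
      inferInstance] A) :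
    ∫ ω in A, (u i ω : ℝ) ∂μ = ∫ ω in A, (u j ω : ℝ) ∂μ := by
  have hfix : ∀ s, p s → Equiv.swap i j s = s := fun s hs =>
    Equiv.swap_apply_of_ne_of_ne (fun h : s = i => hi (h ▸ hs)) (fun h : s = j => hj (h ▸ hs))
  simpa using setIntegral_comp_perm_eq hu hswap (measurable_zeroOutside p)
    (zeroOutside_comp_perm p hfix) (g := fun v => (v j : ℝ))
    (measurable_from_top.comp (measurable_pi_apply j)) hA

theorem aestronglyMeasurable_sum_filter_not_of_sum_eq [Fintype ι] {c : ℕ}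
    (hsum : ∀ᵐ ω ∂μ, ∑ s, u s ω = c) :
    AEStronglyMeasurable[MeasurableSpace.comap (fun ω => zeroOutside p fun s => u s ω)
      inferInstance] (fun ω => ∑ s with ¬ p s, (u s ω : ℝ)) μ := by
  have hF : Measurable fun v : ι → ℕ => (c : ℝ) - ∑ s, (v s : ℝ) :=
    measurable_const.sub (Finset.measurable_sum _ fun s _ =>
      measurable_from_top.comp (measurable_pi_apply s))
  refine ⟨_, (hF.comp (comap_measurable _)).stronglyMeasurable, ?_⟩
  filter_upwards [hsum] with ω hω
  have hsplit := sum_filter_add_sum_filter_not univ p fun s => (u s ω : ℝ)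
  simp only [Function.comp_apply, zeroOutside, Nat.cast_ite, Nat.cast_zero, ← sum_filter]
  rw [← hω, Nat.cast_sum]
  linarith

end ZeroOutside

/-- Lemma E.2 special case: for an exchangeable `{0,1}`-valued vector `(u_1,…,u_{n+1})`
with exactly `n` ones a.s. (indices 0-based: `u ⟨s⟩` is the paper's `u_{s+1}`), fixing
`t ≤ n` and setting `V = ∑_{s=1}^{t+1} u_s`, one has
`P(u_{t+1} = 1 ∣ u_{t+2}, …, u_{n+1}) = V/(t+1)` almost surely, where the conditional
probability is the conditional expectation of the indicator given the σ-algebra generated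
by `u_{t+2}, …, u_{n+1}`. -/
theorem stmt_4 {Ω : Type*} [MeasureSpace Ω] [IsProbabilityMeasure (volume : Measure Ω)]
    (n : ℕ) (u : Fin (n + 1) → Ω → ℕ)
    (humeas : ∀ s, Measurable (u s))
    (hu01 : ∀ s ω, u s ω ≤ 1)
    (hexch : ∀ π : Equiv.Perm (Fin (n + 1)),
      Measure.map (fun ω => fun s => u (π s) ω) volume =
        Measure.map (fun ω => fun s => u s ω) volume)
    (hsum : ∀ᵐ ω ∂volume, ∑ s, u s ω = n)
    (t : ℕ) (ht : t ≤ n)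
    (V : Ω → ℕ) (hV : ∀ ω, V ω = ∑ s : Fin (n + 1), (if (s : ℕ) ≤ t then u s ω else 0))
    (G : MeasurableSpace Ω)
    (hG : G = MeasurableSpace.comap
        (fun ω => fun s : Fin (n + 1) => if t + 1 ≤ (s : ℕ) then u s ω else 0)
        inferInstance) :
    (volume[(fun ω => if u ⟨t, Nat.lt_succ_of_le ht⟩ ω = 1 then (1 : ℝ) else 0) | G])
      =ᵐ[volume] fun ω => (V ω : ℝ) / ((t : ℝ) + 1) := by
  subst hG
  set tt : Fin (n + 1) := ⟨t, Nat.lt_succ_of_le ht⟩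
  let p : Fin (n + 1) → Prop := fun s => t + 1 ≤ (s : ℕ)
  have hm := ((measurable_zeroOutside p).comp (measurable_pi_lambda _ humeas)).comap_le
  have hind : (fun ω => if u tt ω = 1 then (1 : ℝ) else 0) = fun ω => (u tt ω : ℝ) :=
    funext fun ω => by
      rcases Nat.le_one_iff_eq_zero_or_eq_one.mp (hu01 tt ω) with h | h <;> simp [h]
  have hV' : ∀ ω, (V ω : ℝ) = ∑ s with ¬ p s, (u s ω : ℝ) := fun ω => by
    simp only [hV, p, not_le, Nat.lt_succ_iff, sum_filter, Nat.cast_sum, Nat.cast_ite,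
      Nat.cast_zero]
  have hcard : (#{s | ¬ p s} : ℝ) = t + 1 := by
    simp only [p, not_le, Fin.card_filter_val_lt]
    norm_cast
    omega
  have hint : ∀ i, Integrable (fun ω => (u i ω : ℝ)) :=
    fun i => Integrable.of_bound (measurable_from_top.comp (humeas i)).aestronglyMeasurable 1
      (ae_of_all _ fun ω => by simpa using hu01 i ω)
  have hcond := condExp_ae_eq_average_of_setIntegral_eq hm (j := tt) (by simp [p, tt])
    (fun i _ => hint i) (aestronglyMeasurable_sum_filter_not_of_sum_eq p hsum)
    (fun i hi A hA => setIntegral_natCast_eq_of_swap p humeas (hexch _) (mem_filter.1 hi).2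
      (by simp [p, tt]) hA)
  rw [hind]
  filter_upwards [hcond] with ω hω
  exact hω.trans (by rw [hV', hcard])
end

section
/- Let n, N, τ be integers with 0 ≤ N ≤ n and n − N ≤ τ, and let (B_1, …, B_τ) be an exchangeable random vector with values in {0,1} such that Σ_{s=1}^{τ} B_s = n − N almost surely. For t ∈ {1, …, τ} define N_t := N + Σ_{s=t+1}^{τ} B_s. Then for every t ∈ {2, …, τ} and every bounded function f : ℤ → ℝ, almost surely E[ f(N_t + B_t) ∣ B_{t+1}, …, B_τ ] = ((t − n + N_t)/t) · f(N_t) + ((n − N_t)/t) · f(N_t + 1). In particular, since N_{t−1} = N_t + B_t, this gives the backward recursion used to compute the Snell envelope: E_t(s) = max( R_t(s), ((t − n + s)/t) E_{t−1}(s) + ((n − s)/t) E_{t−1}(s+1) ) pointwise over the support of N_t. -/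
/-!
Given the tail `B_{t+1}, …, B_τ`, the transposition of two indices `i, j ≤ t` fixes the tail, so
by exchangeability `f (N_t + B_j)` has the same conditional expectation for every `j ≤ t`. That
expectation is therefore the conditional expectation of the average over `j ≤ t`; since
`B_j ∈ {0, 1}` and `∑_{j ≤ t} B_j = n - N_t`, this average equals
`((t - n + N_t) f(N_t) + (n - N_t) f(N_t + 1)) / t`, which is already a function of the tail.
-/

open MeasureTheory Finset

section CondExp

variable {Ω : Type*} {m m₀ : MeasurableSpace Ω} {μ : Measure Ω}

theorem condExp_comap_ae_eq_of_map_prod_eq {α β : Type*} [MeasurableSpace α] [MeasurableSpace β]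
    {X : Ω → α} {Y Y' : Ω → β} (hX : Measurable X) (hY : Measurable Y) (hY' : Measurable Y')
    (hlaw : μ.map (fun ω => (X ω, Y ω)) = μ.map (fun ω => (X ω, Y' ω)))
    {h : α × β → ℝ} (hh : Measurable h) (hint : Integrable (fun ω => h (X ω, Y ω)) μ) :
    μ[fun ω => h (X ω, Y' ω) | MeasurableSpace.comap X inferInstance]
      =ᵐ[μ] μ[fun ω => h (X ω, Y ω) | MeasurableSpace.comap X inferInstance] := by
  have hm := hX.comap_le
  by_cases hσ : SigmaFinite (μ.trim hm)
  swap
  · simp only [condExp_of_not_sigmaFinite hm hσ, Filter.EventuallyEq.rfl]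
  have hXY := (hX.prodMk hY).aemeasurable (μ := μ)
  have hXY' := (hX.prodMk hY').aemeasurable (μ := μ)
  have hint' : Integrable (fun ω => h (X ω, Y' ω)) μ := by
    rw [← Function.comp_def, ← integrable_map_measure hh.aestronglyMeasurable hXY', ← hlaw,
      integrable_map_measure hh.aestronglyMeasurable hXY]
    exact hint
  refine ae_eq_condExp_of_forall_setIntegral_eq hm hint
    (fun s _ _ => integrable_condExp.integrableOn) (fun s hs _ => ?_)
    stronglyMeasurable_condExp.aestronglyMeasurable
  obtain ⟨S, hS, rfl⟩ := hs
  have hpre : ∀ Z : Ω → β, (fun ω => (X ω, Z ω)) ⁻¹' (S ×ˢ Set.univ) = X ⁻¹' S := fun Z => by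
    ext; simp
  have hS' : MeasurableSet (S ×ˢ (Set.univ : Set β)) := hS.prod MeasurableSet.univ
  calc ∫ ω in X ⁻¹' S, μ[fun ω => h (X ω, Y' ω) | MeasurableSpace.comap X inferInstance] ω ∂μ
      = ∫ ω in X ⁻¹' S, h (X ω, Y' ω) ∂μ := setIntegral_condExp hm hint' ⟨S, hS, rfl⟩
    _ = ∫ p in S ×ˢ Set.univ, h p ∂μ.map (fun ω => (X ω, Y' ω)) := by
      rw [setIntegral_map hS' hh.aestronglyMeasurable hXY', hpre]
    _ = ∫ ω in X ⁻¹' S, h (X ω, Y ω) ∂μ := by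
      rw [← hlaw, setIntegral_map hS' hh.aestronglyMeasurable hXY, hpre]

theorem condExp_ae_eq_of_sum_ae_eq (hm : m ≤ m₀) [SigmaFinite (μ.trim hm)] {ι : Type*}
    {J : Finset ι} (hJ : J.Nonempty) {F : ι → Ω → ℝ} {i₀ : ι} {g : Ω → ℝ}
    (hF : ∀ j ∈ J, Integrable (F j) μ) (hcongr : ∀ j ∈ J, μ[F j | m] =ᵐ[μ] μ[F i₀ | m])
    (hg : StronglyMeasurable[m] g) (hsum : ∀ᵐ ω ∂μ, ∑ j ∈ J, F j ω = #J * g ω) :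
    μ[F i₀ | m] =ᵐ[μ] g := by
  have hsum' : ∑ j ∈ J, F j =ᵐ[μ] fun ω => (#J : ℝ) * g ω := by
    filter_upwards [hsum] with ω hω
    simpa only [Finset.sum_apply] using hω
  have hgint : Integrable (fun ω => (#J : ℝ) * g ω) μ := (integrable_finsetSum' J hF).congr hsum'
  have hcond : μ[∑ j ∈ J, F j | m] =ᵐ[μ] fun ω => (#J : ℝ) * g ω := by
    rw [← condExp_of_stronglyMeasurable hm (hg.const_mul _) hgint]
    exact condExp_congr_ae hsum'
  have hall : ∀ᵐ ω ∂μ, ∀ j ∈ J, μ[F j | m] ω = μ[F i₀ | m] ω :=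
    (Filter.eventually_all_finset J).2 hcongr
  have hJ0 : (#J : ℝ) ≠ 0 := by exact_mod_cast hJ.card_pos.ne'
  filter_upwards [condExp_finsetSum hF m, hcond, hall] with ω h₁ h₂ h₃
  rw [h₂, Finset.sum_apply, sum_congr rfl h₃, sum_const, nsmul_eq_mul] at h₁
  exact (mul_left_cancel₀ hJ0 h₁).symm

end CondExp

theorem sum_comp_add_of_le_one {ι : Type*} (f : ℤ → ℝ) (a : ℤ) (J : Finset ι) (b : ι → ℕ)
    (hb : ∀ j ∈ J, b j ≤ 1) :
    ∑ j ∈ J, f (a + b j) = (#J - ∑ j ∈ J, (b j : ℝ)) * f a + (∑ j ∈ J, (b j : ℝ)) * f (a + 1) := by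
  have hterm : ∀ j ∈ J, f (a + b j) = (1 - (b j : ℝ)) * f a + (b j : ℝ) * f (a + 1) := by
    intro j hj
    have := hb j hj
    interval_cases b j <;> simp
  rw [sum_congr rfl hterm, sum_add_distrib, ← sum_mul, ← sum_mul, sum_sub_distrib, sum_const,
    nsmul_one]

section Tail

variable {τ : ℕ} {β : Type*} [Zero β]

/-- With `0`-based indices, `tailFrom t v` keeps the paper's coordinates `v_{t+1}, …, v_τ` and
zeroes the others. -/
def tailFrom (t : ℕ) (v : Fin τ → β) : Fin τ → β :=
  fun s => if t ≤ (s : ℕ) then v s else 0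

theorem measurable_tailFrom [MeasurableSpace β] (t : ℕ) :
    Measurable (tailFrom (τ := τ) (β := β) t) :=
  measurable_pi_lambda _ fun s => by
    unfold tailFrom
    split_ifs
    exacts [measurable_pi_apply s, measurable_const]

theorem tailFrom_comp_swap {t : ℕ} {i j : Fin τ} (hi : (i : ℕ) < t) (hj : (j : ℕ) < t)
    (v : Fin τ → β) : tailFrom t (v ∘ Equiv.swap i j) = tailFrom t v := by
  ext s
  unfold tailFrom
  split_ifs with hs
  · rw [Function.comp_apply, Equiv.swap_apply_of_ne_of_ne] <;> rintro rfl <;> omega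
  · rfl

theorem sum_eq_sum_lt_add_sum_tailFrom {M : Type*} [AddCommMonoid M] (t : ℕ) (v : Fin τ → M) :
    ∑ s, v s = ∑ s ∈ univ.filter (fun s : Fin τ => (s : ℕ) < t), v s + ∑ s, tailFrom t v s := by
  rw [← sum_filter_add_sum_filter_not univ (fun s : Fin τ => (s : ℕ) < t)]
  simp only [tailFrom, sum_filter, not_lt]

theorem map_tailFrom_prod_eval_eq {Ω : Type*} [MeasurableSpace Ω] [MeasurableSpace β]
    {μ : Measure Ω} {V : Ω → Fin τ → β} (hV : Measurable V)
    (hexch : ∀ π : Equiv.Perm (Fin τ), μ.map (fun ω => V ω ∘ π) = μ.map V)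
    {t : ℕ} {i j : Fin τ} (hi : (i : ℕ) < t) (hj : (j : ℕ) < t) :
    μ.map (fun ω => (tailFrom t (V ω), V ω j)) = μ.map (fun ω => (tailFrom t (V ω), V ω i)) := by
  set F : (Fin τ → β) → (Fin τ → β) × β := fun v => (tailFrom t v, v i)
  have hF : Measurable F := (measurable_tailFrom t).prodMk (measurable_pi_apply i)
  have hswap : (fun ω => (tailFrom t (V ω), V ω j)) = F ∘ fun ω => V ω ∘ Equiv.swap i j := by
    ext1 ω
    simp only [F, Function.comp_apply, tailFrom_comp_swap hi hj, Equiv.swap_apply_left]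
  have hVswap : Measurable fun ω => V ω ∘ Equiv.swap i j :=
    (measurable_pi_lambda _ fun s => measurable_pi_apply (Equiv.swap i j s)).comp hV
  rw [hswap, ← Measure.map_map hF hVswap, hexch, Measure.map_map hF hV]
  rfl

theorem condExp_tailFrom_eval_ae_eq {Ω : Type*} [MeasurableSpace Ω] [MeasurableSpace β]
    {μ : Measure Ω} {V : Ω → Fin τ → β} (hV : Measurable V)
    (hexch : ∀ π : Equiv.Perm (Fin τ), μ.map (fun ω => V ω ∘ π) = μ.map V)
    {t : ℕ} {i j : Fin τ} (hi : (i : ℕ) < t) (hj : (j : ℕ) < t)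
    {h : (Fin τ → β) × β → ℝ} (hh : Measurable h)
    (hint : Integrable (fun ω => h (tailFrom t (V ω), V ω i)) μ) :
    μ[fun ω => h (tailFrom t (V ω), V ω j) |
        MeasurableSpace.comap (fun ω => tailFrom t (V ω)) inferInstance]
      =ᵐ[μ] μ[fun ω => h (tailFrom t (V ω), V ω i) |
        MeasurableSpace.comap (fun ω => tailFrom t (V ω)) inferInstance] :=
  condExp_comap_ae_eq_of_map_prod_eq ((measurable_tailFrom t).comp hV)
    ((measurable_pi_apply i).comp hV) ((measurable_pi_apply j).comp hV)
    (map_tailFrom_prod_eval_eq hV hexch hj hi) hh hint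

theorem sum_filter_lt_comp_add_eq {t : ℕ} (htτ : t ≤ τ) {n N : ℕ} (hN : N ≤ n) {v : Fin τ → ℕ}
    (hv01 : ∀ s, v s ≤ 1) (hv : ∑ s, v s = n - N) {K : ℕ} (hK : K = N + ∑ s, tailFrom t v s)
    (f : ℤ → ℝ) :
    ∑ j ∈ univ.filter (fun s : Fin τ => (s : ℕ) < t), f (K + v j)
      = ((t : ℝ) - n + K) * f K + ((n : ℝ) - K) * f (K + 1) := by
  have hsplit := sum_eq_sum_lt_add_sum_tailFrom t v
  have hlow : ∑ j ∈ univ.filter (fun s : Fin τ => (s : ℕ) < t), (v j : ℝ) = n - K := by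
    rw [sub_eq_of_eq_add]
    exact_mod_cast (by omega : n = ∑ j ∈ univ.filter (fun s : Fin τ => (s : ℕ) < t), v j + K)
  rw [sum_comp_add_of_le_one f K _ v fun j _ => hv01 j, hlow, Fin.card_filter_val_lt,
    min_eq_right htτ]
  ring

end Tail

/-- Backward one-step conditional expectation used for the Snell-envelope recursion:
for an exchangeable `{0,1}`-valued vector `(B_1,…,B_τ)` with `∑ B_s = n - N` a.s.
(indices 0-based: `B ⟨s⟩` is the paper's `B_{s+1}`), with `N_t = N + ∑_{s=t+1}^{τ} B_s`,
for every `t ∈ {2,…,τ}` and every bounded `f : ℤ → ℝ`, almost surely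
`E[f(N_t + B_t) ∣ B_{t+1},…,B_τ] = ((t-n+N_t)/t) f(N_t) + ((n-N_t)/t) f(N_t+1)`. -/
theorem stmt_5 {Ω : Type*} [MeasureSpace Ω] [IsProbabilityMeasure (volume : Measure Ω)]
    (n N τ : ℕ) (hN : N ≤ n)
    (B : Fin τ → Ω → ℕ)
    (hBmeas : ∀ s, Measurable (B s))
    (hB01 : ∀ s ω, B s ω ≤ 1)
    (hexch : ∀ π : Equiv.Perm (Fin τ),
      Measure.map (fun ω => fun s => B (π s) ω) volume =
        Measure.map (fun ω => fun s => B s ω) volume)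
    (hsum : ∀ᵐ ω ∂volume, ∑ s, B s ω = n - N)
    (Nt : ℕ → Ω → ℕ)
    (hNt : ∀ t ω, Nt t ω = N + ∑ s : Fin τ, (if t ≤ (s : ℕ) then B s ω else 0))
    (t : ℕ) (ht2 : 2 ≤ t) (htτ : t ≤ τ)
    (f : ℤ → ℝ) (hf : ∃ Cb : ℝ, ∀ z : ℤ, |f z| ≤ Cb)
    (G : MeasurableSpace Ω)
    (hG : G = MeasurableSpace.comap
        (fun ω => fun s : Fin τ => if t ≤ (s : ℕ) then B s ω else 0) inferInstance) :
    (volume[(fun ω => f ((Nt t ω : ℤ) + (B ⟨t - 1, by omega⟩ ω : ℤ))) | G])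
      =ᵐ[volume] fun ω =>
        (((t : ℝ) - (n : ℝ) + (Nt t ω : ℝ)) / (t : ℝ)) * f ((Nt t ω : ℤ)) +
          (((n : ℝ) - (Nt t ω : ℝ)) / (t : ℝ)) * f ((Nt t ω : ℤ) + 1) := by
  obtain ⟨C, hC⟩ := hf
  subst hG
  set V : Ω → Fin τ → ℕ := fun ω s => B s ω
  set X : Ω → Fin τ → ℕ := fun ω => tailFrom t (V ω)
  have hV : Measurable V := measurable_pi_lambda _ hBmeas
  have hX : Measurable X := (measurable_tailFrom t).comp hV
  have hNtX : ∀ ω, Nt t ω = N + ∑ s, X ω s := hNt t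
  have hNtm : Measurable[MeasurableSpace.comap X inferInstance] (Nt t) := by
    rw [funext hNtX]
    exact (measurable_of_countable fun x : Fin τ → ℕ => N + ∑ s, x s).comp (comap_measurable X)
  set h : (Fin τ → ℕ) × ℕ → ℝ := fun p => f ((N + ∑ s, p.1 s : ℕ) + p.2)
  have hFh : ∀ j, (fun ω => f ((Nt t ω : ℤ) + (B j ω : ℤ))) = fun ω => h (X ω, V ω j) := by
    intro j
    simp only [hNtX]
    rfl
  have hint : ∀ j, Integrable (fun ω => h (X ω, V ω j)) := fun j =>
    .of_bound ((measurable_of_countable h).comp (hX.prodMk (hBmeas j))).aestronglyMeasurable C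
      (ae_of_all _ fun ω => hC _)
  have hi₀ : (⟨t - 1, by omega⟩ : Fin τ) ∈ univ.filter fun s : Fin τ => (s : ℕ) < t := by
    simp only [mem_filter, mem_univ, true_and]; omega
  refine condExp_ae_eq_of_sum_ae_eq hX.comap_le ⟨_, hi₀⟩ (fun j _ => hFh j ▸ hint j)
    (fun j hj => ?_) ?_ ?_
  · rw [hFh, hFh]
    exact condExp_tailFrom_eval_ae_eq hV hexch (mem_filter.1 hi₀).2 (mem_filter.1 hj).2
      (measurable_of_countable h) (hint _)
  · exact ((measurable_of_countable fun k : ℕ => ((t : ℝ) - n + k) / t * f k +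
      ((n : ℝ) - k) / t * f (k + 1)).comp hNtm).stronglyMeasurable
  · filter_upwards [hsum] with ω hω
    rw [sum_filter_lt_comp_add_eq htτ hN (hB01 · ω) hω (hNtX ω) f, Fin.card_filter_val_lt,
      min_eq_right htτ]
    field_simp
end

section
/- Let C ≥ 1 and let A = (A_1, …, A_C) ∈ ℕ^C be available counts per category with total T := Σ_{c=1}^C A_c, and let K ≥ 1 be an integer budget. Call a count vector M = (M_1, …, M_C) ∈ ℕ^C feasible if either M = 0 or (M_c ≤ A_c for all c and Σ_c M_c ≥ K). Define φ(M) := (min_c M_c)/(Σ_c M_c) if Σ_c M_c > 0 and φ(0) := −1/C. Then the maximum of φ(M) over feasible M equals: (i) 1/C if C · min_c A_c ≥ K; (ii) −1/C if T < K (in which case M = 0 is the only feasible vector); and (iii) (min_c A_c)/K if T ≥ K and C · min_c A_c < K. -/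
/-!
Every coordinate of `M` is at least `min M`, so `C · min M ≤ ∑ M` and `φ M ≤ 1/C`; if moreover
`M ≤ A` and `∑ M ≥ K`, then `min M ≤ min A` and `φ M ≤ min A / K`. The value `φ 0 = -1/C` is
negative, hence below both bounds. The bound `1/C` is attained by the constant vector `min A`
when it is feasible, i.e. when `C · min A ≥ K`; otherwise `min A / K` is attained by topping up
the constant vector `min A` below `A` to total exactly `K`, which `K ≤ T` allows. If `T < K`,
only `0` is feasible.
-/

namespace UnderrepresentationIndex

variable {ι : Type*} [Fintype ι]

lemma card_mul_sInf_range_le_sum (M : ι → ℕ) :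
    Fintype.card ι * sInf (Set.range M) ≤ ∑ i, M i :=
  Finset.card_nsmul_le_sum _ _ _ fun i _ => Nat.sInf_le ⟨i, rfl⟩

lemma sInf_range_div_sum_le_inv_card (M : ι → ℕ) (hM : 0 < ∑ i, M i) :
    ((sInf (Set.range M) : ℕ) : ℝ) / ((∑ i, M i : ℕ) : ℝ) ≤ 1 / Fintype.card ι := by
  have hcard : 0 < Fintype.card ι :=
    Fintype.card_pos_iff.2 ⟨(Finset.exists_ne_zero_of_sum_ne_zero hM.ne').choose⟩
  rw [div_le_div_iff₀ (by exact_mod_cast hM) (by exact_mod_cast hcard), one_mul, mul_comm]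
  exact_mod_cast card_mul_sInf_range_le_sum M

omit [Fintype ι] in
lemma sInf_range_mono {M A : ι → ℕ} (h : M ≤ A) :
    sInf (Set.range M) ≤ sInf (Set.range A) :=
  ciInf_mono (OrderBot.bddBelow _) h

lemma sInf_range_div_sum_le {M A : ι → ℕ} {K : ℕ} (hK : 0 < K) (hMA : M ≤ A)
    (hMK : K ≤ ∑ i, M i) :
    ((sInf (Set.range M) : ℕ) : ℝ) / ((∑ i, M i : ℕ) : ℝ) ≤ ((sInf (Set.range A) : ℕ) : ℝ) / K :=
  div_le_div₀ (Nat.cast_nonneg _) (by exact_mod_cast sInf_range_mono hMA)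
    (by exact_mod_cast hK) (by exact_mod_cast hMK)

lemma exists_le_sum_eq (A : ι → ℕ) {L : ℕ} (hL : L ≤ ∑ i, A i) :
    ∃ M ≤ A, ∑ i, M i = L := by
  classical
  induction L with
  | zero => exact ⟨0, fun _ => Nat.zero_le _, by simp⟩
  | succ L ih =>
    obtain ⟨M, hMA, hM⟩ := ih (by omega)
    obtain ⟨j, -, hj⟩ := Finset.exists_lt_of_sum_lt (hM.trans_lt hL)
    refine ⟨M + Pi.single j 1, fun i => ?_, ?_⟩
    · rcases eq_or_ne i j with rfl | hij
      · simpa using hj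
      · simpa [hij] using hMA i
    · simp [Finset.sum_add_distrib, hM]

lemma exists_le_sum_eq_sInf_range_eq [Nonempty ι] (A : ι → ℕ) {K : ℕ}
    (hlo : Fintype.card ι * sInf (Set.range A) ≤ K) (hhi : K ≤ ∑ i, A i) :
    ∃ M ≤ A, ∑ i, M i = K ∧ sInf (Set.range M) = sInf (Set.range A) := by
  set a := sInf (Set.range A)
  have haA : ∀ i, a ≤ A i := fun i => Nat.sInf_le ⟨i, rfl⟩
  have hsplit : ∑ i, (A i - a) + Fintype.card ι * a = ∑ i, A i := by
    rw [← smul_eq_mul, ← Finset.card_univ, ← Finset.sum_const, ← Finset.sum_add_distrib]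
    exact Finset.sum_congr rfl fun i _ => Nat.sub_add_cancel (haA i)
  obtain ⟨N, hNA, hN⟩ := exists_le_sum_eq (fun i => A i - a) (L := K - Fintype.card ι * a)
    (by omega)
  obtain ⟨j, hj⟩ : a ∈ Set.range A := Nat.sInf_mem (Set.range_nonempty A)
  refine ⟨fun i => a + N i, fun i => ?_, ?_, ?_⟩
  · have hNi : N i ≤ A i - a := hNA i
    have := haA i
    show a + N i ≤ A i
    omega
  · rw [Finset.sum_add_distrib, hN, Finset.sum_const, Finset.card_univ, smul_eq_mul]
    omega
  · refine le_antisymm (Nat.sInf_le ⟨j, ?_⟩) (le_ciInf fun i => Nat.le_add_right a (N i))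
    have hNj : N j ≤ A j - a := hNA j
    show a + N j = a
    omega

end UnderrepresentationIndex

open UnderrepresentationIndex

/-- Closed form for the optimal underrepresentation index over feasible count vectors.
`A c` is the available count in category `c`, `T` the total, `K ≥ 1` the budget.
A count vector `M` is feasible if `M = 0` or (`M ≤ A` coordinatewise and `∑ M ≥ K`).
The underrepresentation index is `φ M = (min_c M c)/(∑ M)` for `M ≠ 0` and `-1/C` for `M = 0`.
Then the maximum of `φ` over feasible vectors is `1/C` when `C·min A ≥ K`; it is `-1/C` when
`T < K` (and then `0` is the only feasible vector); and it is `(min A)/K` when `T ≥ K` and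
`C·min A < K`. -/
theorem stmt_6 (C : ℕ) (hC : 1 ≤ C) (A : Fin C → ℕ) (K : ℕ) (hK : 1 ≤ K)
    (T : ℕ) (hT : T = ∑ c, A c)
    (Feasible : (Fin C → ℕ) → Prop)
    (hFeas : ∀ M, Feasible M ↔ (M = 0 ∨ ((∀ c, M c ≤ A c) ∧ K ≤ ∑ c, M c)))
    (φ : (Fin C → ℕ) → ℝ)
    (hφ : ∀ M, 0 < ∑ c, M c → φ M = ((sInf (Set.range M) : ℕ) : ℝ) / ((∑ c, M c : ℕ) : ℝ))
    (hφ0 : ∀ M : Fin C → ℕ, (∑ c, M c = 0) → φ M = -1 / C) :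
    ((K ≤ C * sInf (Set.range A)) → IsGreatest (φ '' {M | Feasible M}) (1 / C)) ∧
    ((T < K) → (IsGreatest (φ '' {M | Feasible M}) (-1 / C) ∧ ∀ M, Feasible M → M = 0)) ∧
    ((K ≤ T ∧ C * sInf (Set.range A) < K) →
      IsGreatest (φ '' {M | Feasible M}) (((sInf (Set.range A) : ℕ) : ℝ) / (K : ℝ))) := by
  have hCpos : (0 : ℝ) < C := by exact_mod_cast hC
  have hcard : Fintype.card (Fin C) = C := Fintype.card_fin C
  have : Nonempty (Fin C) := Fin.pos_iff_nonempty.mp hC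
  have upper : ∀ b : ℝ, 0 ≤ b →
      (∀ M : Fin C → ℕ, M ≤ A → K ≤ ∑ c, M c →
        ((sInf (Set.range M) : ℕ) : ℝ) / ((∑ c, M c : ℕ) : ℝ) ≤ b) →
      b ∈ upperBounds (φ '' {M | Feasible M}) := by
    rintro b hb hbound _ ⟨M, hM, rfl⟩
    rcases (hFeas M).1 hM with rfl | ⟨hMA, hMK⟩
    · rw [hφ0 0 (by simp)]
      exact (div_nonpos_of_nonpos_of_nonneg (by norm_num) hCpos.le).trans hb
    · rw [hφ M (by omega)]
      exact hbound M hMA hMK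
  have hsum_const : ∑ _c : Fin C, sInf (Set.range A) = C * sInf (Set.range A) := by simp
  refine ⟨fun hKa => ⟨⟨fun _ => sInf (Set.range A), ?_, ?_⟩, upper _ (by positivity) ?_⟩,
    fun hTK => ?_, fun ⟨hKT, haK⟩ => ?_⟩
  · exact (hFeas _).2 (Or.inr ⟨fun c => Nat.sInf_le ⟨c, rfl⟩, hsum_const ▸ hKa⟩)
  · have ha : 0 < sInf (Set.range A) := Nat.pos_of_mul_pos_left (by omega : 0 < C * _)
    rw [hφ _ (by omega), Set.range_const, csInf_singleton, hsum_const, Nat.cast_mul]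
    field_simp
  · intro M _ hMK
    simpa only [hcard] using sInf_range_div_sum_le_inv_card M (by omega)
  · have only_zero : ∀ M, Feasible M → M = 0 := fun M hM =>
      ((hFeas M).1 hM).resolve_right fun ⟨hMA, hMK⟩ =>
        absurd (Finset.sum_le_sum (s := Finset.univ) fun c _ => hMA c) (by omega)
    refine ⟨⟨⟨0, (hFeas 0).2 (Or.inl rfl), hφ0 0 (by simp)⟩, ?_⟩, only_zero⟩
    rintro _ ⟨M, hM, rfl⟩
    rw [only_zero M hM, hφ0 0 (by simp)]
  · obtain ⟨M, hMA, hMK, hMa⟩ := exists_le_sum_eq_sInf_range_eq A (K := K)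
      (by rw [hcard]; omega) (by omega)
    refine ⟨⟨M, (hFeas M).2 (Or.inr ⟨hMA, hMK.ge⟩), ?_⟩,
      upper _ (by positivity) fun M hMA hMK => sInf_range_div_sum_le hK hMA hMK⟩
    rw [hφ M (by omega), hMa, hMK]
end

section
/- Let x_1, …, x_m ∈ [0,1] be fixed and let b_1, …, b_m be independent random variables with b_i ∼ Bernoulli(x_i). Then E[ b_1 / max(1, Σ_{j=1}^m b_j) ] = ∫_0^1 x_1 · ∏_{j=2}^m ( x_j s + (1 − x_j) ) ds. -/
/-!
Since `1 / (k + 1) = ∫₀¹ sᵏ ds`, and `b₁ / max(1, ∑ⱼ bⱼ)` vanishes unless `b₁ = 1`, pointwise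
`b₁ / max(1, ∑ⱼ bⱼ) = ∫₀¹ b₁ ∏_{j ≠ 1} s^{bⱼ} ds`. Taking expectations and swapping the two
integrals (the integrand is bounded by `1` for `s ∈ (0, 1]`), independence factorises the inner
expectation into `E[b₁] ∏_{j ≠ 1} E[s^{bⱼ}] = x₁ ∏_{j ≠ 1} (xⱼ s + 1 - xⱼ)`.
-/

open MeasureTheory ProbabilityTheory Finset

section

variable {ι : Type*} [Fintype ι] [DecidableEq ι]

lemma prod_ite_eq_mul_prod_erase {M : Type*} [CommMonoid M]
    (i₀ : ι) (f g : ι → M) :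
    ∏ j, (if j = i₀ then f j else g j) = f i₀ * ∏ j ∈ univ.erase i₀, g j := by
  rw [← mul_prod_erase univ _ (mem_univ i₀), if_pos rfl]
  congr 1
  exact prod_congr rfl fun j hj => if_neg (ne_of_mem_erase hj)

lemma div_max_one_add_eq_integral {n : ℕ} (hn : n = 0 ∨ n = 1) (k : ℕ) :
    (n : ℝ) / max 1 (n + k) = ∫ s in (0 : ℝ)..1, n * s ^ k := by
  rw [intervalIntegral.integral_const_mul, integral_pow]
  rcases hn with rfl | rfl
  · simp
  · rw [max_eq_right (by simp)]
    simp [add_comm]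

lemma div_max_one_sum_eq_integral {b : ι → ℕ}
    (hb : ∀ i, b i = 0 ∨ b i = 1) (i₀ : ι) :
    (b i₀ : ℝ) / max 1 (∑ j, (b j : ℝ)) =
      ∫ s in (0 : ℝ)..1, b i₀ * ∏ j ∈ univ.erase i₀, s ^ b j := by
  simp_rw [prod_pow_eq_pow_sum, ← add_sum_erase _ _ (mem_univ i₀)]
  exact_mod_cast div_max_one_add_eq_integral (hb i₀) _

variable {Ω : Type*} [MeasurableSpace Ω] {μ : Measure Ω} [IsProbabilityMeasure μ]

lemma integral_comp_of_bernoulli {β : Ω → ℕ} {p : ℝ} (hp : 0 ≤ p)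
    (h01 : ∀ ω, β ω = 0 ∨ β ω = 1) (hβ : Measurable β)
    (hP : μ {ω | β ω = 1} = ENNReal.ofReal p) (f : ℕ → ℝ) :
    ∫ ω, f (β ω) ∂μ = p * f 1 + (1 - p) * f 0 := by
  have hmeas : MeasurableSet {ω | β ω = 1} := hβ (measurableSet_singleton 1)
  have hpt : ∀ ω, f (β ω) = f 0 + {ω | β ω = 1}.indicator (fun _ => f 1 - f 0) ω := by
    intro ω
    rcases h01 ω with h | h <;> simp [h, Set.indicator]
  simp_rw [hpt]
  rw [integral_add (integrable_const _) ((integrable_const _).indicator hmeas), integral_const,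
    integral_indicator_const _ hmeas, probReal_univ, measureReal_def, hP, ENNReal.toReal_ofReal hp]
  simp only [smul_eq_mul]
  ring

lemma integral_mul_prod_pow_of_bernoulli
    {x : ι → ℝ} (hx : ∀ i, 0 ≤ x i) {b : ι → Ω → ℕ} (hb01 : ∀ i ω, b i ω = 0 ∨ b i ω = 1)
    (hbmeas : ∀ i, Measurable (b i)) (hindep : iIndepFun b μ)
    (hBer : ∀ i, μ {ω | b i ω = 1} = ENNReal.ofReal (x i)) (i₀ : ι) (s : ℝ) :
    ∫ ω, (b i₀ ω : ℝ) * ∏ j ∈ univ.erase i₀, s ^ b j ω ∂μ =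
      x i₀ * ∏ j ∈ univ.erase i₀, (x j * s + (1 - x j)) := by
  let f : ι → ℕ → ℝ := fun j n => if j = i₀ then (n : ℝ) else s ^ n
  have hexp : ∀ j, ∫ ω, f j (b j ω) ∂μ = if j = i₀ then x j else x j * s + (1 - x j) := by
    intro j
    rw [integral_comp_of_bernoulli (hx j) (hb01 j) (hbmeas j) (hBer j)]
    split_ifs <;> simp [f, *]
  calc ∫ ω, (b i₀ ω : ℝ) * ∏ j ∈ univ.erase i₀, s ^ b j ω ∂μ
      = ∫ ω, ∏ j, f j (b j ω) ∂μ := by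
        simp only [f, prod_ite_eq_mul_prod_erase]
    _ = ∏ j, ∫ ω, f j (b j ω) ∂μ :=
        hindep.integral_fun_prod_comp (fun j => (hbmeas j).aemeasurable)
          (fun j => (measurable_of_countable _).aestronglyMeasurable)
    _ = x i₀ * ∏ j ∈ univ.erase i₀, (x j * s + (1 - x j)) := by
        simp only [hexp, prod_ite_eq_mul_prod_erase]

lemma integrable_mul_prod_pow_uIoc
    {b : ι → Ω → ℕ} (hb01 : ∀ i ω, b i ω = 0 ∨ b i ω = 1) (hbmeas : ∀ i, Measurable (b i))
    (i₀ : ι) :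
    Integrable (Function.uncurry fun (s : ℝ) ω => (b i₀ ω : ℝ) * ∏ j ∈ univ.erase i₀, s ^ b j ω)
      ((volume.restrict (Set.uIoc 0 1)).prod μ) := by
  rw [Set.uIoc_of_le zero_le_one]
  have hs_mem : ∀ᵐ z ∂(volume.restrict (Set.Ioc (0 : ℝ) 1)).prod μ, z.1 ∈ Set.Ioc 0 1 := by
    rw [Measure.restrict_prod_eq_prod_univ]
    filter_upwards [ae_restrict_mem (measurableSet_Ioc.prod MeasurableSet.univ)] with z hz
    exact hz.1
  refine Integrable.of_bound (C := 1) ?_ ?_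
  · apply Measurable.aestronglyMeasurable
    fun_prop
  · filter_upwards [hs_mem] with ⟨s, ω⟩ ⟨hs0, hs1⟩
    have hb_le : ‖(b i₀ ω : ℝ)‖ ≤ 1 := by rcases hb01 i₀ ω with h | h <;> simp [h]
    rw [Function.uncurry_apply_pair, norm_mul, norm_prod]
    exact mul_le_one₀ hb_le (by positivity) (prod_le_one (fun _ _ => by positivity)
      fun j _ => by simpa [abs_of_pos hs0] using pow_le_one₀ hs0.le hs1)

end

/-- For independent Bernoulli variables `b i ∼ Bern(x i)` (encoded as `{0,1}`-valued random
variables with `P(b i = 1) = x i`),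
`E[ b₁ / max(1, ∑ⱼ bⱼ) ] = ∫₀¹ x₁ · ∏_{j ≠ 1} (x j · s + (1 - x j)) ds`. -/
theorem stmt_10 {Ω : Type*} [MeasureSpace Ω] [IsProbabilityMeasure (volume : Measure Ω)]
    (m : ℕ) (hm : 0 < m)
    (x : Fin m → ℝ) (hx : ∀ i, x i ∈ Set.Icc (0 : ℝ) 1)
    (b : Fin m → Ω → ℕ)
    (hb01 : ∀ i ω, b i ω = 0 ∨ b i ω = 1)
    (hbmeas : ∀ i, Measurable (b i))
    (hindep : iIndepFun b volume)
    (hBer : ∀ i, volume {ω | b i ω = 1} = ENNReal.ofReal (x i)) :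
    ∫ ω, (b ⟨0, hm⟩ ω : ℝ) / max 1 (∑ j, (b j ω : ℝ)) ∂volume =
      ∫ s in (0 : ℝ)..1, x ⟨0, hm⟩ * ∏ j ∈ Finset.univ.erase ⟨0, hm⟩, (x j * s + (1 - x j)) := by
  have hpt := fun ω => div_max_one_sum_eq_integral (fun i => hb01 i ω) ⟨0, hm⟩
  rw [integral_congr_ae (ae_of_all _ hpt),
    ← intervalIntegral_integral_swap (integrable_mul_prod_pow_uIoc hb01 hbmeas _)]
  exact intervalIntegral.integral_congr fun s _ =>
    integral_mul_prod_pow_of_bernoulli (fun i => (hx i).1) hb01 hbmeas hindep hBer _ s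
end

section
/- Define f(x) := (1 + 1/x)(1 − e^{−x}) for x > 0. Then sup_{x > 0} f(x) ≤ 1.3. -/
/-!
Clearing the denominator, the claim is `(x + 1) * (1 - exp (-x)) ≤ 13/10 * x`. The Taylor
polynomials of `exp (-x)` of odd degree are lower bounds on `[0, ∞)`: the remainder
`(-1)^n (exp (-x) - T_n x)` has derivative the previous remainder and vanishes at `0`, so all
remainders are nonnegative by induction. On `[0, 3]` the degree-9 bound turns the claim into a
polynomial inequality. On `[3, 10/3]` it is enough that `exp (-x) ≥ exp (-10/3) ≥ 1/40`, read off
the degree-11 bound, and beyond `10/3` the claim is trivial because `1 - 3/10 * x ≤ 0`.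
-/

open Real Finset
open scoped Nat

theorem hasDerivAt_sum_range_neg_pow_div_factorial (n : ℕ) (x : ℝ) :
    HasDerivAt (fun t : ℝ => ∑ i ∈ range (n + 1), (-t) ^ i / i !)
      (-∑ i ∈ range n, (-x) ^ i / i !) x := by
  induction n with
  | zero => simpa using hasDerivAt_const x (1 : ℝ)
  | succ n ih =>
    have hterm : HasDerivAt (fun t : ℝ => (-t) ^ (n + 1) / (n + 1)!) (-((-x) ^ n / n !)) x := by
      refine (((hasDerivAt_neg x).fun_pow (n + 1)).div_const ((n + 1)! : ℝ)).congr_deriv ?_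
      rw [Nat.factorial_succ, Nat.add_sub_cancel]
      push_cast
      field_simp
    simp_rw [sum_range_succ _ (n + 1)]
    rw [sum_range_succ, neg_add]
    exact ih.add hterm

theorem neg_one_pow_mul_exp_neg_sub_sum_nonneg (n : ℕ) {x : ℝ} (hx : 0 ≤ x) :
    0 ≤ (-1) ^ n * (exp (-x) - ∑ i ∈ range n, (-x) ^ i / i !) := by
  induction n generalizing x with
  | zero => simpa using (exp_pos _).le
  | succ n ih =>
    set R : ℝ → ℝ := fun t => (-1) ^ (n + 1) * (exp (-t) - ∑ i ∈ range (n + 1), (-t) ^ i / i !)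
    have hR : ∀ t, HasDerivAt R ((-1) ^ n * (exp (-t) - ∑ i ∈ range n, (-t) ^ i / i !)) t := by
      intro t
      refine ((((hasDerivAt_neg t).exp).fun_sub
        (hasDerivAt_sum_range_neg_pow_div_factorial n t)).const_mul
          ((-1 : ℝ) ^ (n + 1))).congr_deriv ?_
      ring
    have hmono : MonotoneOn R (Set.Ici 0) :=
      monotoneOn_of_hasDerivWithinAt_nonneg (convex_Ici 0)
        (fun t _ => (hR t).continuousAt.continuousWithinAt)
        (fun t _ => (hR t).hasDerivWithinAt)
        (fun t ht => ih (interior_subset ht))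
    have hR0 : R 0 = 0 := by simp [R, sum_range_succ']
    exact hR0 ▸ hmono Set.self_mem_Ici hx hx

theorem sum_range_two_mul_le_exp_neg (n : ℕ) {x : ℝ} (hx : 0 ≤ x) :
    ∑ i ∈ range (2 * n), (-x) ^ i / i ! ≤ exp (-x) := by
  have h := neg_one_pow_mul_exp_neg_sub_sum_nonneg (2 * n) hx
  rw [pow_mul, neg_one_sq, one_pow, one_mul] at h
  linarith

theorem add_one_mul_one_sub_exp_neg_le_of_le_three {x : ℝ} (hx : 0 ≤ x) (h3 : x ≤ 3) :
    (x + 1) * (1 - exp (-x)) ≤ 13 / 10 * x := by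
  have hT : 1 - x + x^2/2 - x^3/6 + x^4/24 - x^5/120 + x^6/720 - x^7/5040 + x^8/40320
      - x^9/362880 ≤ exp (-x) := by
    have h := sum_range_two_mul_le_exp_neg 5 hx
    norm_num [sum_range_succ, Nat.factorial] at h
    linarith
  -- `Q x = (13/10 * x - (x + 1) * (1 - T x)) / x` for the polynomial `T` of `hT`
  have hQ : 0 ≤ 3/10 - x/2 + x^2/3 - x^3/8 + x^4/30 - x^5/144 + x^6/840 - x^7/5760
      + x^8/45360 - x^9/362880 := by
    nlinarith [sq_nonneg (x - 9/5), sq_nonneg (x * (x - 9/5)), sq_nonneg (x^2 * (x - 9/5)),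
      sq_nonneg (x^3 * (x - 9/5)), mul_nonneg hx (sub_nonneg.2 h3), sq_nonneg x,
      sq_nonneg (x - 3), sq_nonneg (x^2 - 3)]
  nlinarith [mul_nonneg hx hQ]

theorem add_one_mul_one_sub_exp_neg_le_of_three_le {x : ℝ} (h3 : 3 ≤ x) :
    (x + 1) * (1 - exp (-x)) ≤ 13 / 10 * x := by
  suffices 1 - 3 / 10 * x ≤ (x + 1) * exp (-x) by linarith
  rcases le_total x (10 / 3) with hx | hx
  · have hE : 1 / 40 ≤ exp (-x) :=
      calc (1 / 40 : ℝ) ≤ ∑ i ∈ range (2 * 6), (-(10 / 3 : ℝ)) ^ i / i ! := by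
            norm_num [sum_range_succ, Nat.factorial]
        _ ≤ exp (-(10 / 3)) := sum_range_two_mul_le_exp_neg 6 (by norm_num)
        _ ≤ exp (-x) := exp_le_exp.2 (by linarith)
    nlinarith
  · nlinarith [exp_pos (-x)]

/-- Let `f x = (1 + 1/x) * (1 - exp (-x))` for `x > 0`. Then `sup_{x>0} f x ≤ 1.3`
(stated equivalently as the pointwise bound, which is equivalent to the bound on the
supremum). -/
theorem stmt_11 : ∀ x : ℝ, 0 < x → (1 + 1 / x) * (1 - Real.exp (-x)) ≤ 1.3 := by
  intro x hx
  have hbound : (x + 1) * (1 - exp (-x)) ≤ 13 / 10 * x :=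
    (le_total x 3).elim (add_one_mul_one_sub_exp_neg_le_of_le_three hx.le)
      add_one_mul_one_sub_exp_neg_le_of_three_le
  rw [one_add_div hx.ne', div_mul_eq_mul_div, div_le_iff₀ hx]
  norm_num
  linarith
end

section
/- Define g(x) := x² + x + 1 − e^x. Then g(x) > 0 for all x ∈ (0, 1.7932] and g(x) < 0 for all x ∈ [1.7933, ∞). -/
/-!
Multiplying by `exp (-x)`, the sign of `x ^ 2 + x + 1 - exp x` is that of `q x - 1`, where
`q x = (x ^ 2 + x + 1) * exp (-x)`. Since `q' x = x * (1 - x) * exp (-x)`, the function `q`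
increases on `[0, 1]` from `q 0 = 1` and decreases on `[1, ∞)`, so it crosses the level `1`
exactly once in `(0, ∞)`; two bounds on `exp` locate the crossing in `(1.7932, 1.7933)`.
-/

open Real Set

noncomputable def quadMulExpNeg (x : ℝ) : ℝ := (x ^ 2 + x + 1) * exp (-x)

lemma hasDerivAt_quadMulExpNeg (x : ℝ) :
    HasDerivAt quadMulExpNeg (x * (1 - x) * exp (-x)) x := by
  refine ((((hasDerivAt_pow 2 x).add (hasDerivAt_id' x)).add_const 1).mul
    (hasDerivAt_neg x).exp).congr_deriv ?_
  norm_num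
  ring

lemma continuous_quadMulExpNeg : Continuous quadMulExpNeg := by
  unfold quadMulExpNeg
  fun_prop

lemma strictMonoOn_quadMulExpNeg : StrictMonoOn quadMulExpNeg (Icc 0 1) := by
  refine strictMonoOn_of_deriv_pos (convex_Icc 0 1) continuous_quadMulExpNeg.continuousOn ?_
  intro x hx
  rw [interior_Icc] at hx
  rw [(hasDerivAt_quadMulExpNeg x).deriv]
  exact mul_pos (mul_pos hx.1 (sub_pos.2 hx.2)) (exp_pos _)

lemma strictAntiOn_quadMulExpNeg : StrictAntiOn quadMulExpNeg (Ici 1) := by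
  refine strictAntiOn_of_deriv_neg (convex_Ici 1) continuous_quadMulExpNeg.continuousOn ?_
  intro x hx
  rw [interior_Ici, mem_Ioi] at hx
  rw [(hasDerivAt_quadMulExpNeg x).deriv]
  exact mul_neg_of_neg_of_pos (mul_neg_of_pos_of_neg (by linarith) (sub_neg.2 hx)) (exp_pos _)

lemma sq_add_add_one_sub_exp (x : ℝ) :
    x ^ 2 + x + 1 - exp x = exp x * (quadMulExpNeg x - 1) := by
  rw [quadMulExpNeg, mul_sub, mul_left_comm, ← exp_add, add_neg_cancel, exp_zero]
  ring

lemma sq_add_add_one_sub_exp_pos_iff (x : ℝ) :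
    0 < x ^ 2 + x + 1 - exp x ↔ 1 < quadMulExpNeg x := by
  rw [sq_add_add_one_sub_exp, mul_pos_iff_of_pos_left (exp_pos x), sub_pos]

lemma sq_add_add_one_sub_exp_neg_iff (x : ℝ) :
    x ^ 2 + x + 1 - exp x < 0 ↔ quadMulExpNeg x < 1 := by
  simpa [sq_add_add_one_sub_exp] using
    mul_lt_mul_iff_right₀ (b := quadMulExpNeg x - 1) (c := 0) (exp_pos x)

lemma exp_1_7932_lt : exp 1.7932 < 1.7932 ^ 2 + 1.7932 + 1 := by
  have h : exp 0.4483 ≤ 1.5656484 :=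
    (exp_bound' (by norm_num) (by norm_num) (n := 10) (by norm_num)).trans
      (by norm_num [Finset.sum_range_succ, Nat.factorial])
  calc exp 1.7932 = exp 0.4483 ^ 4 := by rw [← exp_nat_mul]; norm_num
    _ ≤ 1.5656484 ^ 4 := by gcongr
    _ < _ := by norm_num

lemma lt_exp_1_7933 : 1.7933 ^ 2 + 1.7933 + 1 < exp 1.7933 := by
  have h : 1.5656874 ≤ exp 0.448325 :=
    le_trans (by norm_num [Finset.sum_range_succ, Nat.factorial])
      (sum_le_exp_of_nonneg (x := 0.448325) (by norm_num) 10)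
  calc (1.7933 : ℝ) ^ 2 + 1.7933 + 1 < 1.5656874 ^ 4 := by norm_num
    _ ≤ exp 0.448325 ^ 4 := by gcongr
    _ = exp 1.7933 := by rw [← exp_nat_mul]; norm_num

lemma one_lt_quadMulExpNeg_1_7932 : 1 < quadMulExpNeg 1.7932 :=
  (sq_add_add_one_sub_exp_pos_iff _).1 (sub_pos.2 exp_1_7932_lt)

lemma quadMulExpNeg_1_7933_lt_one : quadMulExpNeg 1.7933 < 1 :=
  (sq_add_add_one_sub_exp_neg_iff _).1 (sub_neg.2 lt_exp_1_7933)

lemma one_lt_quadMulExpNeg {x : ℝ} (hx : x ∈ Ioc (0 : ℝ) 1.7932) : 1 < quadMulExpNeg x := by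
  obtain ⟨hx0, hx⟩ := hx
  rcases le_total x 1 with hx1 | hx1
  · simpa [quadMulExpNeg] using
      strictMonoOn_quadMulExpNeg ⟨le_rfl, zero_le_one⟩ ⟨hx0.le, hx1⟩ hx0
  · exact one_lt_quadMulExpNeg_1_7932.trans_le
      (strictAntiOn_quadMulExpNeg.antitoneOn hx1 (by norm_num) hx)

/-- Let `g x = x² + x + 1 - exp x`. Then `g x > 0` for all `x ∈ (0, 1.7932]` and
`g x < 0` for all `x ∈ [1.7933, ∞)`. -/
theorem stmt_12 :
    (∀ x : ℝ, x ∈ Set.Ioc (0 : ℝ) 1.7932 → 0 < x ^ 2 + x + 1 - Real.exp x) ∧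
    (∀ x : ℝ, x ∈ Set.Ici (1.7933 : ℝ) → x ^ 2 + x + 1 - Real.exp x < 0) := by
  refine ⟨fun x hx => (sq_add_add_one_sub_exp_pos_iff x).2 (one_lt_quadMulExpNeg hx),
    fun x hx => (sq_add_add_one_sub_exp_neg_iff x).2 ?_⟩
  exact (strictAntiOn_quadMulExpNeg.antitoneOn (by norm_num)
    (le_trans (by norm_num : (1 : ℝ) ≤ 1.7933) hx) hx).trans_lt quadMulExpNeg_1_7933_lt_one
end

section
/- Let α ∈ (0,1), let m ≥ 1 be an integer, let β > 0, and let e ∈ ℝ^m with each e_i ∈ {0, β}; set k := #{i : e_i = β}. Then there exists a nonzero vector χ ∈ [0,1]^m that is relaxed self-consistent with respect to e_1, …, e_m at level α if and only if α β k ≥ m (equivalently, k ≥ 1 and β ≥ m/(αk)). -/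
/-!
Summing the relaxed self-consistency inequalities over `i` gives
`∑ χ ≤ (α / m) (∑ e) ∑ χ = (α β k / m) ∑ χ`, and `∑ χ > 0` for a nonzero `χ ≥ 0`, so `α β k ≥ m`.
Conversely, if `α β k ≥ m` then the indicator of `{i | e i = β}` is relaxed self-consistent,
and it is nonzero because `m ≥ 1` forces `k ≥ 1`.
-/

open Finset

section

variable {ι : Type*} [Fintype ι]

theorem one_le_sum_of_le_mul_sum {χ c : ι → ℝ} (hχ : 0 ≤ χ) (hχ0 : χ ≠ 0)
    (h : ∀ i, χ i ≤ c i * ∑ j, χ j) : 1 ≤ ∑ i, c i := by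
  have hsum_pos : 0 < ∑ j, χ j := by
    obtain ⟨i, hi⟩ := Function.ne_iff.mp hχ0
    exact lt_of_lt_of_le (lt_of_le_of_ne (hχ i) (Ne.symm hi))
      (single_le_sum (fun j _ => hχ j) (mem_univ i))
  have : (∑ j, χ j) ≤ (∑ i, c i) * ∑ j, χ j :=
    calc ∑ j, χ j ≤ ∑ i, c i * ∑ j, χ j := sum_le_sum fun i _ => h i
      _ = (∑ i, c i) * ∑ j, χ j := (sum_mul ..).symm
  nlinarith

theorem boole_le_mul_sum_boole (p : ι → Prop) [DecidablePred p] {c : ι → ℝ}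
    (hp : ∀ i, p i → 1 ≤ c i * #{i | p i}) (hc : ∀ i, ¬ p i → 0 ≤ c i) (i : ι) :
    (if p i then (1 : ℝ) else 0) ≤ c i * ∑ j, if p j then (1 : ℝ) else 0 := by
  rw [sum_boole]
  split_ifs with h
  · exact hp i h
  · exact mul_nonneg (hc i h) (Nat.cast_nonneg _)

theorem sum_eq_mul_card_of_forall_eq_zero_or_eq {e : ι → ℝ} {β : ℝ}
    (he : ∀ i, e i = 0 ∨ e i = β) : ∑ i, e i = β * #{i | e i = β} := by
  calc ∑ i, e i = ∑ i, β * if e i = β then 1 else 0 :=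
        sum_congr rfl fun i _ => by
          split_ifs with h
          · rw [h, mul_one]
          · rw [mul_zero, (he i).resolve_right h]
    _ = β * #{i | e i = β} := by rw [← mul_sum, sum_boole]

end

theorem stmt_13_general (α : ℝ) (m : ℕ) (hm : 1 ≤ m)
    (β : ℝ) (e : Fin m → ℝ) (he : ∀ i, e i = 0 ∨ e i = β)
    (k : ℕ) (hk : k = (Finset.univ.filter fun i => e i = β).card) :
    (∃ χ : Fin m → ℝ, χ ≠ 0 ∧ (∀ i, χ i ∈ Set.Icc (0 : ℝ) 1) ∧
        ∀ i, χ i ≤ α * e i / m * ∑ j, χ j) ↔ (m : ℝ) ≤ α * β * k := by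
  have hm0 : (0 : ℝ) < m := by exact_mod_cast hm
  have hsum : ∑ i, α * e i / m = α * β * k / m := by
    rw [← sum_div, ← mul_sum, sum_eq_mul_card_of_forall_eq_zero_or_eq he, hk, mul_assoc]
  constructor
  · rintro ⟨χ, hχ0, hχ, hrsc⟩
    have := one_le_sum_of_le_mul_sum (fun i => (hχ i).1) hχ0 hrsc
    rwa [hsum, one_le_div hm0] at this
  · intro hmk
    have hk0 : k ≠ 0 := by rintro rfl; simp at hmk; linarith
    obtain ⟨i₀, hi₀⟩ : ∃ i, e i = β := by
      simpa [hk, Finset.card_eq_zero, Finset.filter_eq_empty_iff] using hk0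
    refine ⟨fun i => if e i = β then 1 else 0, fun h => by simpa [hi₀] using congrFun h i₀,
      fun i => by dsimp only; split_ifs <;> simp, boole_le_mul_sum_boole _ (fun i hi => ?_) (fun i hi => ?_)⟩
    · rw [hi, ← hk, div_mul_eq_mul_div, one_le_div hm0]
      exact hmk
    · rcases he i with h | h
      · simp [h]
      · exact absurd h hi

/-- Feasibility check for relaxed self-consistency: if the e-values take only the values
`0` and `β > 0` and `k` is the number of e-values equal to `β`, then a nonzero relaxed
self-consistent vector `χ ∈ [0,1]^m` exists iff `α β k ≥ m`. -/
theorem stmt_13 (α : ℝ) (hα : α ∈ Set.Ioo (0 : ℝ) 1) (m : ℕ) (hm : 1 ≤ m)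
    (β : ℝ) (hβ : 0 < β) (e : Fin m → ℝ) (he : ∀ i, e i = 0 ∨ e i = β)
    (k : ℕ) (hk : k = (Finset.univ.filter fun i => e i = β).card) :
    (∃ χ : Fin m → ℝ, χ ≠ 0 ∧ (∀ i, χ i ∈ Set.Icc (0 : ℝ) 1) ∧
        ∀ i, χ i ≤ α * e i / m * ∑ j, χ j) ↔ (m : ℝ) ≤ α * β * k :=
  stmt_13_general α m hm β e he k hk
end

section
/- Let Σ ∈ ℝ^{m×m} be a symmetric positive definite matrix and κ ∈ ℝ^m with κ_i ≥ 0 for all i. Define the feasible set F := { χ ∈ [0,1]^m : χ_i ≤ κ_i · Σ_{j=1}^m χ_j for all i } and the Sharpe objective φ(χ) := (Σ_{j=1}^m χ_j)/√(χᵀΣχ) for χ ≠ 0 and φ(0) := 0. Suppose F ∩ { χ : Σ_j χ_j = 1 } is nonempty and let x* minimize χᵀΣχ over F ∩ { χ : Σ_j χ_j = 1 }. Then x* maximizes φ over all of F, i.e., φ(χ) ≤ φ(x*) for every χ ∈ F. -/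
/-!
Fractional programming: the Sharpe objective is invariant under positive scaling, and every
nonzero feasible `χ` rescales to the feasible point `χ / ∑ χ` on the normalization slice. There
the objective is `1 / √(χᵀ Σ χ)`, which is largest where the quadratic form is smallest.
-/

open Matrix

lemma Fintype.sum_inv_sum_smul {ι : Type*} [Fintype ι] {χ : ι → ℝ} (hs : ∑ j, χ j ≠ 0) :
    ∑ j, ((∑ j, χ j)⁻¹ • χ) j = 1 := by
  simp only [Pi.smul_apply, smul_eq_mul, ← Finset.mul_sum]
  exact inv_mul_cancel₀ hs

/-- The relaxed self-consistent vectors `F`. -/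
def relaxedSelfConsistent {ι : Type*} [Fintype ι] (κ : ι → ℝ) : Set (ι → ℝ) :=
  {χ | (∀ i, χ i ∈ Set.Icc (0 : ℝ) 1) ∧ ∀ i, χ i ≤ κ i * ∑ j, χ j}

namespace relaxedSelfConsistent

variable {ι : Type*} [Fintype ι] {κ χ : ι → ℝ}

lemma nonneg (hχ : χ ∈ relaxedSelfConsistent κ) : 0 ≤ χ :=
  fun i => (hχ.1 i).1

lemma sum_pos (hχ : χ ∈ relaxedSelfConsistent κ) (hχ0 : χ ≠ 0) : 0 < ∑ j, χ j :=
  Fintype.sum_pos (lt_of_le_of_ne (nonneg hχ) (Ne.symm hχ0))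

lemma le_sum (hχ : χ ∈ relaxedSelfConsistent κ) (i : ι) : χ i ≤ ∑ j, χ j :=
  Finset.single_le_sum (fun j _ => nonneg hχ j) (Finset.mem_univ i)

lemma inv_sum_smul_mem (hχ : χ ∈ relaxedSelfConsistent κ) (hs : 0 < ∑ j, χ j) :
    (∑ j, χ j)⁻¹ • χ ∈ relaxedSelfConsistent κ := by
  refine ⟨fun i => ⟨?_, ?_⟩, fun i => ?_⟩
  · exact mul_nonneg (inv_nonneg.mpr hs.le) (nonneg hχ i)
  · exact (inv_mul_le_one₀ hs).mpr (le_sum hχ i)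
  · rw [Fintype.sum_inv_sum_smul hs.ne', mul_one]
    exact (inv_mul_le_iff₀ hs).mpr (mul_comm (κ i) _ ▸ hχ.2 i)

end relaxedSelfConsistent

lemma Matrix.smul_dotProduct_mulVec_smul {n R : Type*} [Fintype n] [CommSemiring R]
    (M : Matrix n n R) (c : R) (x : n → R) :
    (c • x) ⬝ᵥ M *ᵥ (c • x) = c ^ 2 * (x ⬝ᵥ M *ᵥ x) := by
  rw [mulVec_smul, smul_dotProduct, dotProduct_smul, smul_eq_mul, smul_eq_mul]
  ring

/-- The scalar core of the reduction, with `a = xsᵀ Σ xs` and `b = χᵀ Σ χ`. -/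
lemma div_sqrt_le_one_div_sqrt {a b s : ℝ} (ha : 0 < a) (hs : 0 < s)
    (h : a ≤ (s⁻¹) ^ 2 * b) : s / √b ≤ 1 / √a := by
  have hb : s ^ 2 * a ≤ b := by
    rwa [inv_pow, inv_mul_eq_div, le_div_iff₀ (by positivity), mul_comm] at h
  have hb0 : 0 < b := lt_of_lt_of_le (by positivity) hb
  rw [div_le_div_iff₀ (Real.sqrt_pos.mpr hb0) (Real.sqrt_pos.mpr ha), one_mul,
    ← Real.sqrt_sq hs.le, ← Real.sqrt_mul (by positivity)]
  exact Real.sqrt_le_sqrt hb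

theorem stmt_14_general (m : ℕ) (S : Matrix (Fin m) (Fin m) ℝ) (hS : S.PosDef)
    (κ : Fin m → ℝ)
    (F : Set (Fin m → ℝ))
    (hF : F = {χ | (∀ i, χ i ∈ Set.Icc (0 : ℝ) 1) ∧ ∀ i, χ i ≤ κ i * ∑ j, χ j})
    (φ : (Fin m → ℝ) → ℝ)
    (hφ : ∀ χ, χ ≠ 0 → φ χ = (∑ j, χ j) / Real.sqrt (χ ⬝ᵥ S.mulVec χ))
    (hφ0 : φ 0 = 0)
    (xs : Fin m → ℝ) (hxs1 : ∑ j, xs j = 1)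
    (hxsmin : ∀ χ ∈ F, (∑ j, χ j = 1) → xs ⬝ᵥ S.mulVec xs ≤ χ ⬝ᵥ S.mulVec χ) :
    ∀ χ ∈ F, φ χ ≤ φ xs := by
  change F = relaxedSelfConsistent κ at hF
  subst hF
  have hxs0 : xs ≠ 0 := by
    rintro rfl
    simp at hxs1
  rw [hφ xs hxs0, hxs1]
  intro χ hχ
  rcases eq_or_ne χ 0 with rfl | hχ0
  · rw [hφ0]
    positivity
  have hs := relaxedSelfConsistent.sum_pos hχ hχ0
  have hmin := hxsmin _ (relaxedSelfConsistent.inv_sum_smul_mem hχ hs)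
    (Fintype.sum_inv_sum_smul hs.ne')
  rw [smul_dotProduct_mulVec_smul] at hmin
  rw [hφ χ hχ0]
  exact div_sqrt_le_one_div_sqrt (by simpa using hS.dotProduct_mulVec_pos hxs0) hs hmin

/-- Fractional-programming reduction for the Sharpe ratio: if `xs` minimizes the quadratic
form `χᵀ Σ χ` over the relaxed self-consistent vectors with `∑ χ = 1`, then `xs` maximizes
the Sharpe objective `φ(χ) = (∑ χ)/√(χᵀ Σ χ)` (with `φ 0 = 0`) over the whole feasible set
`F = {χ ∈ [0,1]^m : χ_i ≤ κ_i ∑_j χ_j}`. -/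
theorem stmt_14 (m : ℕ) (S : Matrix (Fin m) (Fin m) ℝ) (hS : S.PosDef)
    (κ : Fin m → ℝ) (hκ : ∀ i, 0 ≤ κ i)
    (F : Set (Fin m → ℝ))
    (hF : F = {χ | (∀ i, χ i ∈ Set.Icc (0 : ℝ) 1) ∧ ∀ i, χ i ≤ κ i * ∑ j, χ j})
    (φ : (Fin m → ℝ) → ℝ)
    (hφ : ∀ χ, χ ≠ 0 → φ χ = (∑ j, χ j) / Real.sqrt (χ ⬝ᵥ S.mulVec χ))
    (hφ0 : φ 0 = 0)
    (xs : Fin m → ℝ) (hxsF : xs ∈ F) (hxs1 : ∑ j, xs j = 1)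
    (hxsmin : ∀ χ ∈ F, (∑ j, χ j = 1) → xs ⬝ᵥ S.mulVec xs ≤ χ ⬝ᵥ S.mulVec χ) :
    ∀ χ ∈ F, φ χ ≤ φ xs :=
  stmt_14_general m S hS κ F hF φ hφ hφ0 xs hxs1 hxsmin
end

section
/- Let t ≥ 1 and 1 ≤ k ≤ t+1 be integers. Let b' be uniformly distributed over the set of binary vectors in {0,1}^{t+1} with exactly k ones. Construct b ∈ {0,1}^t as follows: set b := (b'_1, …, b'_t); if b'_{t+1} = 0, then, conditionally on b', draw an index J uniformly at random from {j ∈ {1, …, t} : b'_j = 1} and set the J-th coordinate of b to 0. Then b is uniformly distributed over the set of binary vectors in {0,1}^t with exactly k−1 ones. -/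
/-!
Given `b = w`, either the last coordinate of `b'` was `1` and `b' = (w, 1)`, or it was `0` and
`b'` is `w` with one of its `t + 1 - k` zeros `j` raised to `1`, and `J = j`; the sum constraint
forces `J` onto a one of `b'`. Hence
`P(b = w) = 1/C(t+1,k) + (t+1-k) / (k C(t+1,k)) = (t+1) / (k C(t+1,k)) = 1/C(t,k-1)`.
-/

open MeasureTheory Finset
open scoped ENNReal

theorem Fintype.sum_update_add_self {ι M : Type*} [Fintype ι] [DecidableEq ι] [AddCommMonoid M]
    (f : ι → M) (j : ι) (a : M) : ∑ i, Function.update f j a i + f j = ∑ i, f i + a := by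
  rw [Finset.sum_update_of_mem (Finset.mem_univ j),
    Finset.sum_eq_add_sum_sdiff_singleton_of_mem (Finset.mem_univ j) f]
  ac_rfl

theorem Fintype.card_filter_eq_zero_add_sum_of_le_one {ι : Type*} [Fintype ι] (w : ι → ℕ)
    (hw : ∀ i, w i ≤ 1) : #{i | w i = 0} + ∑ i, w i = Fintype.card ι := by
  classical
  have hsum : ∑ i, w i = #{i | ¬w i = 0} := by
    rw [Finset.card_filter]
    exact Finset.sum_congr rfl fun i _ => by have := hw i; split_ifs <;> omega
  rw [hsum, Finset.card_filter_add_card_filter_not, Finset.card_univ]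

theorem Fin.snoc_le_one {n : ℕ} {w : Fin n → ℕ} {a : ℕ} (hw : ∀ i, w i ≤ 1) (ha : a ≤ 1) :
    ∀ i, (Fin.snoc w a : Fin (n + 1) → ℕ) i ≤ 1 :=
  Fin.lastCases (by simpa) fun i => by simpa using hw i

theorem Function.update_le_one {ι : Type*} [DecidableEq ι] {w : ι → ℕ} (hw : ∀ i, w i ≤ 1)
    (j : ι) : ∀ i, Function.update w j 1 i ≤ 1 := fun i => by
  rcases eq_or_ne i j with rfl | hij
  · simp
  · simpa [hij] using hw i

/-- The vector `b` of the sampling scheme, as a function of `b' = v` and `J = j`. -/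
def coupledTruncation {t : ℕ} (v : Fin (t + 1) → ℕ) (j : Fin t) : Fin t → ℕ :=
  fun i => if v (Fin.last t) = 0 ∧ i = j then 0 else v i.castSucc

section coupledTruncation

variable {t : ℕ} {v : Fin (t + 1) → ℕ} {j : Fin t} {w : Fin t → ℕ}

theorem coupledTruncation_of_last_eq_zero (h : v (Fin.last t) = 0) :
    coupledTruncation v j = Function.update (Fin.init v) j 0 := by
  funext i
  by_cases hij : i = j
  · subst hij; simp [coupledTruncation, h]
  · simp [coupledTruncation, hij, Fin.init]

theorem coupledTruncation_of_last_ne_zero (h : v (Fin.last t) ≠ 0) :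
    coupledTruncation v j = Fin.init v := by
  funext i
  simp [coupledTruncation, h, Fin.init]

theorem coupledTruncation_eq_iff (hv : ∀ i, v i ≤ 1) (hsum : ∑ i, v i = ∑ i, w i + 1) :
    coupledTruncation v j = w ↔
      v = Fin.snoc w 1 ∨ (w j = 0 ∧ v = Fin.snoc (Function.update w j 1) 0) := by
  by_cases hlast : v (Fin.last t) = 0
  · rw [coupledTruncation_of_last_eq_zero hlast]
    constructor
    · rintro rfl
      refine Or.inr ⟨Function.update_self .., ?_⟩
      -- the one removed at `j` must account for the missing unit of mass
      have hvj : Fin.init v j = 1 := by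
        have hupdate := Fintype.sum_update_add_self (Fin.init v) j 0
        have hinit : ∑ i, v i = ∑ i, Fin.init v i + v (Fin.last t) := Fin.sum_univ_castSucc v
        omega
      conv_lhs => rw [← Fin.snoc_init_self v]
      rw [Function.update_idem, hlast, Function.update_eq_self_iff.mpr hvj.symm]
    · rintro (rfl | ⟨hwj, rfl⟩)
      · simp at hlast
      · rw [Fin.init_snoc, Function.update_idem, ← hwj, Function.update_eq_self]
  · have hlast' : v (Fin.last t) = 1 := by have := hv (Fin.last t); omega
    rw [coupledTruncation_of_last_ne_zero hlast]
    constructor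
    · rintro rfl
      refine Or.inl ?_
      conv_lhs => rw [← Fin.snoc_init_self v]
      rw [hlast']
    · rintro (rfl | ⟨-, rfl⟩)
      · exact Fin.init_snoc _ _
      · simp at hlast

end coupledTruncation

theorem ENNReal.natCast_mul_inv_natCast_mul {a : ℕ} (ha : a ≠ 0) (x : ℝ≥0∞) :
    (a : ℝ≥0∞) * ((a : ℝ≥0∞) * x)⁻¹ = x⁻¹ := by
  rw [ENNReal.mul_inv (.inl (by exact_mod_cast ha)) (.inl (ENNReal.natCast_ne_top a)),
    ENNReal.mul_inv_cancel_left (by exact_mod_cast ha) (ENNReal.natCast_ne_top a)]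

theorem ENNReal.inv_choose_add_mul_inv_choose_div {t k : ℕ} (hk1 : 1 ≤ k) (hk2 : k ≤ t + 1) :
    (((t + 1).choose k : ℝ≥0∞))⁻¹ + ((t + 1 - k : ℕ) : ℝ≥0∞) *
      ((((t + 1).choose k : ℝ≥0∞))⁻¹ / (k : ℝ≥0∞)) = ((t.choose (k - 1) : ℝ≥0∞))⁻¹ := by
  have hchoose : k * (t + 1).choose k = (t + 1) * t.choose (k - 1) := by
    rw [Nat.add_one_mul_choose_eq, Nat.sub_add_cancel hk1, mul_comm]
  calc _ = ((k + (t + 1 - k) : ℕ) : ℝ≥0∞) * ((k * (t + 1).choose k : ℕ) : ℝ≥0∞)⁻¹ := by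
        rw [Nat.cast_add, add_mul, Nat.cast_mul, ENNReal.natCast_mul_inv_natCast_mul (by omega),
          div_eq_mul_inv, mul_comm (_ : ℝ≥0∞)⁻¹,
          ENNReal.mul_inv (.inr (ENNReal.natCast_ne_top _)) (.inl (ENNReal.natCast_ne_top _))]
    _ = _ := by
      rw [Nat.add_sub_cancel' hk2, hchoose, Nat.cast_mul,
        ENNReal.natCast_mul_inv_natCast_mul (by omega)]

theorem measure_union_biUnion_eq_and_eq {Ω α β : Type*} [MeasurableSpace Ω] [MeasurableSpace α]
    [MeasurableSingletonClass α] [MeasurableSpace β] [MeasurableSingletonClass β]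
    (μ : Measure Ω) {X : Ω → α} {Y : Ω → β} (hX : Measurable X) (hY : Measurable Y)
    {a : α} {f : β → α} {s : Finset β} (hf : ∀ j ∈ s, f j ≠ a) :
    μ ({ω | X ω = a} ∪ ⋃ j ∈ s, {ω | X ω = f j ∧ Y ω = j}) =
      μ {ω | X ω = a} + ∑ j ∈ s, μ {ω | X ω = f j ∧ Y ω = j} := by
  have hmeas : ∀ j, MeasurableSet {ω | X ω = f j ∧ Y ω = j} := fun j =>
    (hX (measurableSet_singleton _)).inter (hY (measurableSet_singleton _))
  rw [measure_union _ (s.measurableSet_biUnion fun j _ => hmeas j),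
    measure_biUnion_finset _ fun j _ => hmeas j]
  · intro i _ j _ hij
    exact Set.disjoint_left.mpr fun ω hi hj => hij (hi.2.symm.trans hj.2)
  · refine Set.disjoint_left.mpr fun ω ha hb => ?_
    simp only [Set.mem_iUnion, Set.mem_ofPred_eq, exists_prop] at hb
    obtain ⟨j, hj, hXj, -⟩ := hb
    exact hf j hj (hXj.symm.trans ha)

theorem stmt_15_general {Ω : Type*} [MeasureSpace Ω]
    (t k : ℕ) (hk1 : 1 ≤ k) (hk2 : k ≤ t + 1)
    (b' : Ω → Fin (t + 1) → ℕ) (hb'meas : Measurable b')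
    (hb'01 : ∀ ω i, b' ω i ≤ 1) (hb'sum : ∀ ω, ∑ i, b' ω i = k)
    (hb'unif : ∀ v : Fin (t + 1) → ℕ, (∀ i, v i ≤ 1) → (∑ i, v i = k) →
      volume {ω | b' ω = v} = (((t + 1).choose k : ℝ≥0∞))⁻¹)
    (J : Ω → Fin t) (hJmeas : Measurable J)
    (hJunif : ∀ v : Fin (t + 1) → ℕ, (∀ i, v i ≤ 1) → (∑ i, v i = k) →
      v (Fin.last t) = 0 → ∀ j : Fin t, v j.castSucc = 1 →
        volume {ω | b' ω = v ∧ J ω = j} = (((t + 1).choose k : ℝ≥0∞))⁻¹ / (k : ℝ≥0∞))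
    (b : Ω → Fin t → ℕ)
    (hb : ∀ ω i, b ω i =
      if b' ω (Fin.last t) = 0 ∧ i = J ω then 0 else b' ω i.castSucc) :
    ∀ w : Fin t → ℕ, (∀ i, w i ≤ 1) → (∑ i, w i = k - 1) →
      volume {ω | b ω = w} = ((t.choose (k - 1) : ℝ≥0∞))⁻¹ := by
  intro w hw hwsum
  have hevent : {ω | b ω = w} = {ω | b' ω = Fin.snoc w 1} ∪
      ⋃ j ∈ ({j | w j = 0} : Finset (Fin t)),
        {ω | b' ω = Fin.snoc (Function.update w j 1) 0 ∧ J ω = j} := by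
    ext ω
    have hbω : b ω = coupledTruncation (b' ω) (J ω) := funext (hb ω)
    simp only [Set.mem_ofPred_eq, hbω, Set.mem_union, Set.mem_iUnion, Finset.mem_filter_univ,
      exists_prop, ← and_assoc, exists_eq_right',
      coupledTruncation_eq_iff (hb'01 ω) (by rw [hb'sum, hwsum]; omega)]
  have hlast_one : volume {ω | b' ω = Fin.snoc w 1} = (((t + 1).choose k : ℝ≥0∞))⁻¹ :=
    hb'unif _ (Fin.snoc_le_one hw le_rfl) (by simp; omega)
  have hlast_zero : ∀ j ∈ ({j | w j = 0} : Finset (Fin t)),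
      volume {ω | b' ω = Fin.snoc (Function.update w j 1) 0 ∧ J ω = j} =
        (((t + 1).choose k : ℝ≥0∞))⁻¹ / (k : ℝ≥0∞) := by
    intro j hj
    have hsum := Fintype.sum_update_add_self w j 1
    rw [(Finset.mem_filter_univ _).mp hj] at hsum
    exact hJunif _ (Fin.snoc_le_one (Function.update_le_one hw j) zero_le_one)
      (by rw [Fin.sum_snoc]; omega) (Fin.snoc_last _ _) j (by simp)
  have hcard : #({j | w j = 0} : Finset (Fin t)) = t + 1 - k := by
    have := Fintype.card_filter_eq_zero_add_sum_of_le_one w hw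
    rw [Fintype.card_fin] at this
    omega
  rw [hevent, measure_union_biUnion_eq_and_eq _ hb'meas hJmeas
      (fun j _ h => by simpa using congrFun h (Fin.last t)),
    hlast_one, Finset.sum_congr rfl hlast_zero, Finset.sum_const, hcard, nsmul_eq_mul]
  exact ENNReal.inv_choose_add_mul_inv_choose_div hk1 hk2

/-- Coupled Monte Carlo sampling scheme: if `b'` is uniform over binary vectors of length
`t+1` with exactly `k` ones, and `b ∈ {0,1}^t` is obtained from the first `t` coordinates
of `b'` by, when the last coordinate of `b'` is `0`, flipping to `0` a uniformly chosen
coordinate `J` among the ones of `b'` (conditionally on `b'`), then `b` is uniform over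
binary vectors of length `t` with exactly `k-1` ones. -/
theorem stmt_15 {Ω : Type*} [MeasureSpace Ω] [IsProbabilityMeasure (volume : Measure Ω)]
    (t k : ℕ) (ht : 1 ≤ t) (hk1 : 1 ≤ k) (hk2 : k ≤ t + 1)
    (b' : Ω → Fin (t + 1) → ℕ) (hb'meas : Measurable b')
    (hb'01 : ∀ ω i, b' ω i ≤ 1) (hb'sum : ∀ ω, ∑ i, b' ω i = k)
    (hb'unif : ∀ v : Fin (t + 1) → ℕ, (∀ i, v i ≤ 1) → (∑ i, v i = k) →
      volume {ω | b' ω = v} = (((t + 1).choose k : ℝ≥0∞))⁻¹)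
    (J : Ω → Fin t) (hJmeas : Measurable J)
    (hJunif : ∀ v : Fin (t + 1) → ℕ, (∀ i, v i ≤ 1) → (∑ i, v i = k) →
      v (Fin.last t) = 0 → ∀ j : Fin t, v j.castSucc = 1 →
        volume {ω | b' ω = v ∧ J ω = j} = (((t + 1).choose k : ℝ≥0∞))⁻¹ / (k : ℝ≥0∞))
    (b : Ω → Fin t → ℕ)
    (hb : ∀ ω i, b ω i =
      if b' ω (Fin.last t) = 0 ∧ i = J ω then 0 else b' ω i.castSucc) :
    ∀ w : Fin t → ℕ, (∀ i, w i ≤ 1) → (∑ i, w i = k - 1) →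
      volume {ω | b ω = w} = ((t.choose (k - 1) : ℝ≥0∞))⁻¹ :=
  stmt_15_general t k hk1 hk2 b' hb'meas hb'01 hb'sum hb'unif J hJmeas hJunif b hb
end
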